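/- arXiv:math/0601777 — 12 statements merged into one kernel-verified Lean document; each statement's English description precedes it below -/
import Mathlib

section
/- In any square group M, the map T = HP - Id : M_ee → M_ee is a group homomorphism satisfying T² = Id, PT = P, and T(x|y)_H + (y|x)_H = 0 for all x, y in M_e. -/
/-- Cross-effect of a map `H` into an abelian group: `(x|y)_H = H(x+y) - H x - H y`. -/
def crossEff {Me : Type*} [AddGroup Me] {Mee : Type*} [AddCommGroup Mee]
    (H : Me → Mee) (x y : Me) : Mee :=
  H (x + y) - H x - H y

/-- The axioms of a square group `M_e --H--> M_ee --P--> M_e`: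
`M_ee` abelian, `P` a homomorphism, `H` quadratic (bilinear cross-effect), and
`(Pa|y)_H = 0 = (x|Pb)_H`, `P (x|y)_H = -x-y+x+y`, `PHP = 2P`. -/
structure IsSquareGroup {Me : Type*} [AddGroup Me] {Mee : Type*} [AddCommGroup Mee]
    (P : Mee →+ Me) (H : Me → Mee) : Prop where
  cross_add_left : ∀ x x' y : Me, crossEff H (x + x') y = crossEff H x y + crossEff H x' y
  cross_add_right : ∀ x y y' : Me, crossEff H x (y + y') = crossEff H x y + crossEff H x y'
  cross_P_left : ∀ (a : Mee) (y : Me), crossEff H (P a) y = 0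
  cross_P_right : ∀ (x : Me) (b : Mee), crossEff H x (P b) = 0
  P_cross : ∀ x y : Me, P (crossEff H x y) = -x - y + x + y
  PHP : ∀ a : Mee, P (H (P a)) = P a + P a

/-- In any square group, `T = HP - Id` is a homomorphism with `T² = Id`, `PT = P`,
and `T (x|y)_H + (y|x)_H = 0`. -/
theorem squareGroup_T_properties {Me : Type*} [AddGroup Me] {Mee : Type*} [AddCommGroup Mee]
    (P : Mee →+ Me) (H : Me → Mee) (hsq : IsSquareGroup P H)
    (T : Mee → Mee) (hT : ∀ a, T a = H (P a) - a) :
    (∀ a b : Mee, T (a + b) = T a + T b) ∧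
    (∀ a : Mee, T (T a) = a) ∧
    (∀ a : Mee, P (T a) = P a) ∧
    (∀ x y : Me, T (crossEff H x y) + crossEff H y x = 0) := by
  obtain ⟨cl, cr, cPl, cPr, Pc, PHPax⟩ := hsq
  have c0l : ∀ y : Me, crossEff H 0 y = 0 := by
    intro y
    have h := cl 0 0 y
    rw [add_zero] at h
    exact (left_eq_add.mp h)
  have c0r : ∀ x : Me, crossEff H x 0 = 0 := by
    intro x
    have h := cr x 0 0
    rw [add_zero] at h
    exact (left_eq_add.mp h)
  have H0 : H 0 = 0 := by
    have h := c0l 0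
    simp [crossEff] at h
    exact h
  have cnl : ∀ x y : Me, crossEff H (-x) y = -crossEff H x y := by
    intro x y
    have h := cl (-x) x y
    rw [neg_add_cancel, c0l] at h
    exact eq_neg_of_add_eq_zero_left h.symm
  have cnr : ∀ x y : Me, crossEff H x (-y) = -crossEff H x y := by
    intro x y
    have h := cr x (-y) y
    rw [neg_add_cancel, c0r] at h
    exact eq_neg_of_add_eq_zero_left h.symm
  have Hadd : ∀ a b : Me, H (a + b) = H a + H b + crossEff H a b := by
    intro a b
    simp only [crossEff]
    abel
  have Hneg : ∀ x : Me, H (-x) = crossEff H x x - H x := by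
    intro x
    have h : (0 : Mee) = H x + H (-x) + crossEff H x (-x) := by
      rw [← Hadd, add_neg_cancel, H0]
    rw [cnr] at h
    rw [← sub_eq_zero,
      show H (-x) - (crossEff H x x - H x) = H x + H (-x) + -crossEff H x x from by abel]
    exact h.symm
  have PT : ∀ a : Mee, P (T a) = P a := by
    intro a
    rw [hT, map_sub, PHPax, add_sub_cancel_right]
  have Tadd : ∀ a b : Mee, T (a + b) = T a + T b := by
    intro a b
    rw [hT, hT, hT, map_add, Hadd, cPl]
    abel
  refine ⟨Tadd, ?_, PT, ?_⟩
  · intro a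
    rw [hT (T a), PT, hT]
    abel
  · intro x y
    rw [hT, Pc]
    have e : -x - y + x + y = -x + -y + x + y := by rw [sub_eq_add_neg]
    rw [e, Hadd (-x + -y + x) y, Hadd (-x + -y) x, Hadd (-x) (-y),
      cl (-x + -y) x y, cl (-x) (-y) y, cl (-x) (-y) x,
      Hneg, Hneg]
    simp only [cnl, cnr]
    abel
end

section
/- In any square group M, one has H(-x - y + x + y) = (x|y)_H - (y|x)_H for all x, y in M_e. -/
/-- In any square group, `H(-x-y+x+y) = (x|y)_H - (y|x)_H`. -/
theorem squareGroup_H_commutator {Me : Type*} [AddGroup Me] {Mee : Type*} [AddCommGroup Mee]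
    (P : Mee →+ Me) (H : Me → Mee) (hsq : IsSquareGroup P H) :
    ∀ x y : Me, H (-x - y + x + y) = crossEff H x y - crossEff H y x := by
  intro x y
  have hc : -x - y + x + y = P (crossEff H x y) := (hsq.P_cross x y).symm
  have h1 : y + x + (-x - y + x + y) = x + y := by
    simp [sub_eq_add_neg, ← add_assoc]
  have h2 : crossEff H (y + x) (-x - y + x + y) = 0 := by
    rw [hsq.cross_add_left, hc, hsq.cross_P_right, hsq.cross_P_right, add_zero]
  have h3 : H (x + y) = H (y + x) + H (-x - y + x + y) := by
    have h2' := h2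
    unfold crossEff at h2'
    rw [h1, sub_sub, sub_eq_zero] at h2'
    exact h2'
  simp only [crossEff]
  rw [h3]
  abel
end

section
/- In any square group M, the map Δ : M_e → M_ee defined by Δ(x) = HPH(x) - 2H(x) + (x|x)_H is a group homomorphism, and satisfies the equivalent formulas Δ(x) = HPH(x) + H(2x) - 4H(x) = (x|x)_H - H(x) + TH(x) = H(-x) + TH(x), where T = HP - Id. -/
section Aux

variable {Me : Type*} [AddGroup Me] {Mee : Type*} [AddCommGroup Mee]
  (P : Mee →+ Me) (H : Me → Mee)

lemma Hadd (a b : Me) : H (a + b) = H a + H b + crossEff H a b := by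
  simp only [crossEff]; abel

variable (hsq : IsSquareGroup P H)
include hsq

lemma cr_zero_left (y : Me) : crossEff H 0 y = 0 := by
  have h := hsq.cross_add_left 0 0 y
  rw [add_zero] at h
  have h2 : crossEff H 0 y + crossEff H 0 y = 0 + crossEff H 0 y := by
    rw [zero_add]; exact h.symm
  exact add_right_cancel h2

lemma cr_zero_right (x : Me) : crossEff H x 0 = 0 := by
  have h := hsq.cross_add_right x 0 0
  rw [add_zero] at h
  have h2 : crossEff H x 0 + crossEff H x 0 = 0 + crossEff H x 0 := by
    rw [zero_add]; exact h.symm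
  exact add_right_cancel h2

lemma cr_neg_left (x y : Me) : crossEff H (-x) y = -crossEff H x y := by
  have h := hsq.cross_add_left x (-x) y
  rw [add_neg_cancel, cr_zero_left P H hsq] at h
  exact eq_neg_of_add_eq_zero_right h.symm

lemma cr_neg_right (x y : Me) : crossEff H x (-y) = -crossEff H x y := by
  have h := hsq.cross_add_right x y (-y)
  rw [add_neg_cancel, cr_zero_right P H hsq] at h
  exact eq_neg_of_add_eq_zero_right h.symm

lemma H_zero : H 0 = 0 := by
  have h := cr_zero_left P H hsq 0
  simp only [crossEff, add_zero] at h
  have key : H 0 - 0 = -((H 0 - H 0 - H 0) - 0) := by abel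
  rw [h, sub_zero, sub_zero, neg_zero] at key
  exact key

lemma H_neg (x : Me) : H (-x) = crossEff H x x - H x := by
  have h := cr_neg_right P H hsq x x
  rw [crossEff, add_neg_cancel, H_zero P H hsq] at h
  have key : H (-x) - (crossEff H x x - H x) =
      -((0 - H x - H (-x)) - -crossEff H x x) := by abel
  rw [h, sub_self, neg_zero] at key
  exact sub_eq_zero.mp key

lemma HP_cross (x y : Me) :
    H (P (crossEff H x y)) = crossEff H x y - crossEff H y x := by
  rw [hsq.P_cross]
  have e1 : -x - y + x + y = -x + -y + x + y := by rw [sub_eq_add_neg]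
  rw [e1, Hadd H (-x + -y + x) y, Hadd H (-x + -y) x, Hadd H (-x) (-y),
      hsq.cross_add_left (-x + -y) x y, hsq.cross_add_left (-x) (-y) y,
      hsq.cross_add_left (-x) (-y) x]
  simp only [cr_neg_left P H hsq, cr_neg_right P H hsq, H_neg P H hsq]
  abel

end Aux

/-- In any square group, `Δ(x) = HPH(x) - 2H(x) + (x|x)_H` is a homomorphism and admits
the equivalent expressions `HPH(x) + H(2x) - 4H(x)`, `(x|x)_H - H(x) + TH(x)`, and
`H(-x) + TH(x)`, where `T = HP - Id`. -/
theorem squareGroup_Delta_hom {Me : Type*} [AddGroup Me] {Mee : Type*} [AddCommGroup Mee]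
    (P : Mee →+ Me) (H : Me → Mee) (hsq : IsSquareGroup P H)
    (T : Mee → Mee) (hT : ∀ a, T a = H (P a) - a)
    (Δ : Me → Mee) (hΔ : ∀ x, Δ x = H (P (H x)) - 2 • H x + crossEff H x x) :
    (∀ x y : Me, Δ (x + y) = Δ x + Δ y) ∧
    (∀ x : Me, Δ x = H (P (H x)) + H (x + x) - 4 • H x) ∧
    (∀ x : Me, Δ x = crossEff H x x - H x + T (H x)) ∧
    (∀ x : Me, Δ x = H (-x) + T (H x)) := by
  refine ⟨?_, ?_, ?_, ?_⟩
  · intro x y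
    rw [hΔ, hΔ, hΔ, Hadd H x y, map_add, map_add,
        Hadd H (P (H x) + P (H y)) (P (crossEff H x y)),
        Hadd H (P (H x)) (P (H y)),
        hsq.cross_P_left, hsq.cross_P_right, HP_cross P H hsq,
        hsq.cross_add_left x y (x + y), hsq.cross_add_right x x y,
        hsq.cross_add_right y x y]
    abel
  · intro x
    rw [hΔ, Hadd H x x]
    abel
  · intro x
    rw [hΔ, hT]
    abel
  · intro x
    rw [hΔ, hT, H_neg P H hsq]
    abel
end

section
/- In any square group M, with Δ(x) = HPH(x) - 2H(x) + (x|x)_H and T = HP - Id, one has ΔP = 0, PΔ = 0, and Δ + TΔ = 0 (i.e., TΔ(x) = -Δ(x) for all x in M_e). -/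
/-- In any square group, with `Δ(x) = HPH(x) - 2H(x) + (x|x)_H` and `T = HP - Id`,
one has `ΔP = 0`, `PΔ = 0` and `Δ + TΔ = 0`. -/
theorem squareGroup_Delta_relations {Me : Type*} [AddGroup Me] {Mee : Type*} [AddCommGroup Mee]
    (P : Mee →+ Me) (H : Me → Mee) (hsq : IsSquareGroup P H)
    (T : Mee → Mee) (hT : ∀ a, T a = H (P a) - a)
    (Δ : Me → Mee) (hΔ : ∀ x, Δ x = H (P (H x)) - 2 • H x + crossEff H x x) :
    (∀ a : Mee, Δ (P a) = 0) ∧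
    (∀ x : Me, P (Δ x) = 0) ∧
    (∀ x : Me, Δ x + T (Δ x) = 0) := by
  have h0 : H 0 = 0 := by
    have h := hsq.cross_P_left 0 0
    simp [crossEff] at h
    exact h
  have hPΔ : ∀ x : Me, P (Δ x) = 0 := by
    intro x
    rw [hΔ x]
    have h1 := hsq.PHP (H x)
    have h2 := hsq.P_cross x x
    rw [map_add, map_sub, map_nsmul, h1, h2, two_nsmul]
    rw [sub_eq_add_neg, neg_add_rev]
    simp [add_assoc]
  refine ⟨?_, hPΔ, ?_⟩
  · intro a
    rw [hΔ (P a), hsq.PHP a]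
    have hc := hsq.cross_P_left a (P a)
    have h3 : H (P a + P a) = H (P a) + H (P a) := by
      have := hc
      unfold crossEff at this
      rwa [sub_sub, sub_eq_zero] at this
    rw [hc, h3, two_smul]
    abel
  · intro x
    rw [hT (Δ x), hPΔ x, h0]
    abel
end

section
/- In any square group M, for any integer n the map n* : M_e → M_e defined by n*(x) = nx + C(n,2)·PH(x) (where C(n,2) = n(n-1)/2) is a group endomorphism; moreover (nm)* = n* ∘ m*, n*(P(a)) = P(n²a), and (n*x | n*y)_H = n²(x|y)_H. -/
theorem Int.two_mul_mul_pred_ediv_two (n : ℤ) : 2 * (n * (n - 1) / 2) = n * (n - 1) :=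
  Int.two_mul_ediv_two_of_even n.even_mul_pred_self

theorem Int.add_one_mul_self_ediv_two (n : ℤ) :
    (n + 1) * (n + 1 - 1) / 2 = n * (n - 1) / 2 + n :=
  mul_left_cancel₀ two_ne_zero <| by
    linear_combination (n + 1).two_mul_mul_pred_ediv_two - n.two_mul_mul_pred_ediv_two

theorem Int.mul_mul_pred_ediv_two (n m : ℤ) :
    n * m * (n * m - 1) / 2 = n * (n - 1) / 2 * m + n ^ 2 * (m * (m - 1) / 2) :=
  mul_left_cancel₀ two_ne_zero <| by
    linear_combination (n * m).two_mul_mul_pred_ediv_two - m * n.two_mul_mul_pred_ediv_two -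
      n ^ 2 * m.two_mul_mul_pred_ediv_two

section

variable {Me : Type*} [AddGroup Me] {Mee : Type*} [AddCommGroup Mee]

theorem apply_add_eq_crossEff_add (H : Me → Mee) (x y : Me) :
    H (x + y) = crossEff H x y + H x + H y := by
  rw [crossEff]; abel

def nStar (P : Mee →+ Me) (H : Me → Mee) (n : ℤ) (x : Me) : Me :=
  n • x + (n * (n - 1) / 2) • P (H x)

end

namespace IsSquareGroup

variable {Me : Type*} [AddGroup Me] {Mee : Type*} [AddCommGroup Mee]
  {P : Mee →+ Me} {H : Me → Mee} (hsq : IsSquareGroup P H)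
include hsq

theorem addCommute_P (b : Mee) (z : Me) : AddCommute (P b) z := by
  have h := hsq.P_cross (P b) z
  rw [hsq.cross_P_left, map_zero, eq_comm, sub_eq_add_neg, ← neg_add_rev, add_assoc,
    neg_add_eq_zero] at h
  exact h.symm

theorem add_eq_add_add_P_crossEff (x y : Me) : y + x = x + y + P (crossEff H y x) := by
  simp [hsq.P_cross, sub_eq_add_neg, add_assoc]

theorem crossEff_zsmul_left (n : ℤ) (x y : Me) : crossEff H (n • x) y = n • crossEff H x y :=
  map_zsmul (AddMonoidHom.mk' (crossEff H · y) (hsq.cross_add_left · · y)) n x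

theorem crossEff_zsmul_right (n : ℤ) (x y : Me) : crossEff H x (n • y) = n • crossEff H x y :=
  map_zsmul (AddMonoidHom.mk' (crossEff H x) (hsq.cross_add_right x)) n y

theorem P_crossEff_self (x : Me) : P (crossEff H x x) = 0 := by
  simp [hsq.P_cross, sub_eq_add_neg, add_assoc]

theorem P_crossEff_add_crossEff (x y : Me) : P (crossEff H x y + crossEff H y x) = 0 := by
  simp [hsq.P_cross, sub_eq_add_neg, add_assoc]

theorem P_H_zsmul (n : ℤ) (x : Me) : P (H (n • x)) = n • P (H x) := by
  let f : ℤ →+ Me := AddMonoidHom.mk' (fun k => P (H (k • x))) fun k l => by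
    rw [add_zsmul, apply_add_eq_crossEff_add H, map_add, map_add, hsq.crossEff_zsmul_left,
      hsq.crossEff_zsmul_right, map_zsmul, map_zsmul, hsq.P_crossEff_self, smul_zero, smul_zero,
      zero_add]
  simpa [f] using map_zsmul f n 1

theorem zsmul_add_eq (n : ℤ) (x y : Me) :
    n • (x + y) = n • x + n • y + P ((n * (n - 1) / 2) • crossEff H y x) := by
  have step (k : ℤ) :
      k • x + k • y + P ((k * (k - 1) / 2) • crossEff H y x) + (x + y) =
        (k + 1) • x + (k + 1) • y + P (((k + 1) * (k + 1 - 1) / 2) • crossEff H y x) := by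
    calc _ = k • x + (k • y + x) + y + P ((k * (k - 1) / 2) • crossEff H y x) := by
          simp only [add_assoc]; rw [(hsq.addCommute_P _ (x + y)).eq, add_assoc]
      _ = k • x + (x + k • y + P (k • crossEff H y x)) + y +
            P ((k * (k - 1) / 2) • crossEff H y x) := by
          rw [hsq.add_eq_add_add_P_crossEff x (k • y), hsq.crossEff_zsmul_left]
      _ = k • x + x + (k • y + y) +
            (P (k • crossEff H y x) + P ((k * (k - 1) / 2) • crossEff H y x)) := by
          simp only [add_assoc]; rw [(hsq.addCommute_P _ y).left_comm]
      _ = _ := by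
          rw [← map_add, ← add_zsmul, add_comm k, ← Int.add_one_mul_self_ediv_two,
            ← add_one_zsmul, ← add_one_zsmul]
  induction n using Int.induction_on with
  | zero => simp
  | succ k ih => rw [add_one_zsmul, ih, step]
  | pred k ih =>
    apply add_right_cancel (b := x + y)
    rw [← add_one_zsmul, sub_add_cancel, ih, step, sub_add_cancel]

theorem nStar_add (n : ℤ) (x y : Me) : nStar P H n (x + y) = nStar P H n x + nStar P H n y := by
  set c := n * (n - 1) / 2
  have hPH : P (c • crossEff H y x) + c • P (H (x + y)) = c • P (H x) + c • P (H y) :=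
    calc _ = P (c • (crossEff H x y + crossEff H y x) + (c • H x + c • H y)) := by
          rw [apply_add_eq_crossEff_add H, ← map_zsmul, ← map_add]; congr 1; module
      _ = _ := by
          rw [map_add, map_zsmul, hsq.P_crossEff_add_crossEff, smul_zero, zero_add, map_add,
            map_zsmul, map_zsmul]
  rw [nStar, nStar, nStar, hsq.zsmul_add_eq, add_assoc, hPH, add_assoc, add_assoc,
    ((hsq.addCommute_P _ _).zsmul_left c).left_comm]

theorem nStar_P (n : ℤ) (a : Mee) : nStar P H n (P a) = P (n ^ 2 • a) := by
  rw [nStar, hsq.PHP, ← two_zsmul, smul_smul, ← add_zsmul, map_zsmul]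
  congr 1
  linear_combination n.two_mul_mul_pred_ediv_two

theorem nStar_mul (n m : ℤ) (x : Me) : nStar P H (n * m) x = nStar P H n (nStar P H m x) := by
  rw [nStar.eq_def P H m, hsq.nStar_add, ← map_zsmul, hsq.nStar_P, nStar, nStar, hsq.P_H_zsmul]
  simp only [map_zsmul, smul_smul]
  rw [add_assoc, ← add_zsmul, Int.mul_mul_pred_ediv_two]

theorem crossEff_nStar (n : ℤ) (x y : Me) :
    crossEff H (nStar P H n x) (nStar P H n y) = n ^ 2 • crossEff H x y := by
  rw [nStar, nStar, ← map_zsmul, ← map_zsmul, hsq.cross_add_left, hsq.cross_P_left,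
    hsq.cross_add_right, hsq.cross_P_right, add_zero, add_zero, hsq.crossEff_zsmul_left,
    hsq.crossEff_zsmul_right, smul_smul, sq]

end IsSquareGroup

/-- In any square group, for `n : ℤ` the map `n*(x) = n • x + C(n,2) • PH(x)` is an
endomorphism of `M_e`, `(nm)* = n* ∘ m*`, `n*(P a) = P (n² • a)`, and
`(n*x | n*y)_H = n² • (x|y)_H`. -/
theorem squareGroup_nstar {Me : Type*} [AddGroup Me] {Mee : Type*} [AddCommGroup Mee]
    (P : Mee →+ Me) (H : Me → Mee) (hsq : IsSquareGroup P H)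
    (nstar : ℤ → Me → Me)
    (hnstar : ∀ (n : ℤ) (x : Me), nstar n x = n • x + (n * (n - 1) / 2) • P (H x)) :
    (∀ (n : ℤ) (x y : Me), nstar n (x + y) = nstar n x + nstar n y) ∧
    (∀ (n m : ℤ) (x : Me), nstar (n * m) x = nstar n (nstar m x)) ∧
    (∀ (n : ℤ) (a : Mee), nstar n (P a) = P (n ^ 2 • a)) ∧
    (∀ (n : ℤ) (x y : Me), crossEff H (nstar n x) (nstar n y) = n ^ 2 • crossEff H x y) := by
  obtain rfl : nstar = nStar P H := funext₂ hnstar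
  exact ⟨hsq.nStar_add, hsq.nStar_mul, hsq.nStar_P, hsq.crossEff_nStar⟩
end

section
/- In any square group M, the cross-effect (-|-)_H : M_e × M_e → M_ee descends to a well-defined biadditive map Coker(P) ⊗ Coker(P) → M_ee, and the homomorphism Δ(x) = HPH(x) - 2H(x) + (x|x)_H descends to a homomorphism Coker(P) → Ker(P) ⊆ M_ee. -/
/-! Everything follows by expanding `H (x + y) = H x + H y + (x|y)` and using biadditivity.
The one non-formal input is `H (P (x|y)) = (x|y) - (y|x)`: the commutator `P (x|y)` equals
`-(y + x) + (x + y)`, and expanding `H` on it leaves `H (x + y) - H (y + x)`. With it the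
cross terms of `Δ (x + y)` cancel, and `PHP = 2P` makes `HPH (P a) = 2 H (P a)` cancel
against `-2 H (P a)` in `Δ (x + P a)`. -/

section

variable {Me : Type*} [AddGroup Me] {Mee : Type*} [AddCommGroup Mee]

theorem apply_add_eq_add_crossEff (H : Me → Mee) (x y : Me) :
    H (x + y) = H x + H y + crossEff H x y := by
  unfold crossEff; abel

def squareDelta (P : Mee →+ Me) (H : Me → Mee) (x : Me) : Mee :=
  H (P (H x)) - 2 • H x + crossEff H x x

namespace IsSquareGroup

variable {P : Mee →+ Me} {H : Me → Mee} (hsq : IsSquareGroup P H)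
include hsq

theorem crossEff_zero_left (y : Me) : crossEff H 0 y = 0 := by
  simpa using hsq.cross_add_left 0 0 y

theorem crossEff_zero_right (x : Me) : crossEff H x 0 = 0 := by
  simpa using hsq.cross_add_right x 0 0

theorem apply_zero : H 0 = 0 := by
  simpa [crossEff] using hsq.crossEff_zero_left 0

theorem crossEff_neg_left (x y : Me) : crossEff H (-x) y = -crossEff H x y := by
  have h := hsq.cross_add_left x (-x) y
  rw [add_neg_cancel, hsq.crossEff_zero_left] at h
  exact (neg_eq_of_add_eq_zero_right h.symm).symm

theorem crossEff_neg_right (x y : Me) : crossEff H x (-y) = -crossEff H x y := by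
  have h := hsq.cross_add_right x y (-y)
  rw [add_neg_cancel, hsq.crossEff_zero_right] at h
  exact (neg_eq_of_add_eq_zero_right h.symm).symm

theorem apply_neg (x : Me) : H (-x) = crossEff H x x - H x := by
  have h := apply_add_eq_add_crossEff H x (-x)
  rw [add_neg_cancel, hsq.apply_zero, hsq.crossEff_neg_right] at h
  calc H (-x) = crossEff H x x - H x + (H x + H (-x) + -crossEff H x x) := by abel
    _ = crossEff H x x - H x := by rw [← h, add_zero]

theorem crossEff_add_comm_right (z x y : Me) :
    crossEff H z (x + y) = crossEff H z (y + x) := by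
  rw [hsq.cross_add_right, hsq.cross_add_right, add_comm]

theorem apply_add_P (x : Me) (b : Mee) : H (x + P b) = H x + H (P b) := by
  rw [apply_add_eq_add_crossEff H, hsq.cross_P_right, add_zero]

theorem apply_P_add (a b : Mee) : H (P (a + b)) = H (P a) + H (P b) := by
  rw [map_add, hsq.apply_add_P]

theorem apply_P_apply_P (a : Mee) : H (P (H (P a))) = 2 • H (P a) := by
  rw [hsq.PHP, ← map_add, hsq.apply_P_add, two_nsmul]

theorem apply_P_crossEff (x y : Me) :
    H (P (crossEff H x y)) = crossEff H x y - crossEff H y x := by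
  have hcomm : P (crossEff H x y) = -(y + x) + (x + y) := by
    rw [hsq.P_cross, neg_add_rev, sub_eq_add_neg, add_assoc]
  rw [hcomm, apply_add_eq_add_crossEff H, hsq.apply_neg, hsq.crossEff_neg_left,
    hsq.crossEff_add_comm_right (y + x) x y, apply_add_eq_add_crossEff H y x,
    apply_add_eq_add_crossEff H x y]
  abel

theorem crossEff_add_P_left (x y : Me) (a : Mee) : crossEff H (x + P a) y = crossEff H x y := by
  rw [hsq.cross_add_left, hsq.cross_P_left, add_zero]

theorem crossEff_add_P_right (x y : Me) (b : Mee) :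
    crossEff H x (y + P b) = crossEff H x y := by
  rw [hsq.cross_add_right, hsq.cross_P_right, add_zero]

theorem squareDelta_add (x y : Me) :
    squareDelta P H (x + y) = squareDelta P H x + squareDelta P H y := by
  simp only [squareDelta]
  rw [apply_add_eq_add_crossEff H x y, hsq.apply_P_add, hsq.apply_P_add, hsq.apply_P_crossEff,
    hsq.cross_add_left, hsq.cross_add_right, hsq.cross_add_right]
  abel

theorem squareDelta_add_P (x : Me) (a : Mee) : squareDelta P H (x + P a) = squareDelta P H x := by
  simp only [squareDelta]
  rw [hsq.apply_add_P, hsq.apply_P_add, hsq.apply_P_apply_P, hsq.crossEff_add_P_left,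
    hsq.crossEff_add_P_right]
  abel

theorem P_squareDelta (x : Me) : P (squareDelta P H x) = 0 := by
  rw [squareDelta, map_add, map_sub, hsq.PHP, hsq.P_cross, map_nsmul, two_nsmul]
  simp [sub_eq_add_neg, add_assoc]

end IsSquareGroup

end

/-- In any square group, the cross-effect descends to a biadditive map on `Coker(P)`
(i.e. it is invariant under translating either argument by elements of the image of `P`),
and `Δ(x) = HPH(x) - 2H(x) + (x|x)_H` descends to a homomorphism `Coker(P) → Ker(P)`. -/
theorem squareGroup_descend_cokernel {Me : Type*} [AddGroup Me] {Mee : Type*} [AddCommGroup Mee]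
    (P : Mee →+ Me) (H : Me → Mee) (hsq : IsSquareGroup P H)
    (Δ : Me → Mee) (hΔ : ∀ x, Δ x = H (P (H x)) - 2 • H x + crossEff H x x) :
    (∀ (x y : Me) (a : Mee), crossEff H (x + P a) y = crossEff H x y) ∧
    (∀ (x y : Me) (b : Mee), crossEff H x (y + P b) = crossEff H x y) ∧
    (∀ x y : Me, Δ (x + y) = Δ x + Δ y) ∧
    (∀ (x : Me) (a : Mee), Δ (x + P a) = Δ x) ∧
    (∀ x : Me, P (Δ x) = 0) := by
  obtain rfl : Δ = squareDelta P H := funext hΔ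
  exact ⟨hsq.crossEff_add_P_left, hsq.crossEff_add_P_right, hsq.squareDelta_add,
    hsq.squareDelta_add_P, hsq.P_squareDelta⟩
end

section
/- Let S be a set, A an abelian group, f₀ : S → A any map, and Φ : ℤ[S] ⊗ ℤ[S] → A a homomorphism. Then there exists a unique quadratic map f : ⟨S⟩^nil → A from the free nil₂-group on S such that f(s) = f₀(s) for all s ∈ S and f(u+v) = f(u) + f(v) + Φ(û ⊗ v̂) for all u, v ∈ ⟨S⟩^nil, where û denotes the image of u in the abelianization ℤ[S]. -/
/-!
A map `f` with `f (u * v) = f u + f v + Φ (û ⊗ v̂)` is the same thing as a homomorphic section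
`u ↦ (f u, u)` of the central extension of `⟨S⟩ⁿⁱˡ` by `A` with the bilinear 2-cocycle
`(u, v) ↦ Φ (û ⊗ v̂)`. This cocycle vanishes as soon as one argument lies in the commutator
subgroup, so an element of the extension lying over a commutator commutes with every element whose
image it commutes with. Hence the lift `s ↦ (f₀ s, s)` from the free group kills the triple
commutators, as the quotient map to `⟨S⟩ⁿⁱˡ` does, and descends to such a section. Two sections
agreeing on the generators coincide, which gives uniqueness.
-/

open scoped TensorProduct

/-- The free nilpotent group of class two on a set `S`. -/
abbrev FreeNil2 (S : Type*) : Type _ :=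
  FreeGroup S ⧸ (⊤ : Subgroup (FreeGroup S)).lowerCentralSeries 2

/-- The abelianization of the free nil₂-group on `S` (isomorphic to `ℤ[S]`),
viewed additively. -/
abbrev FreeNil2Ab (S : Type*) : Type _ := Additive (Abelianization (FreeNil2 S))

/-- The class of `u` in the abelianization. -/
def nil2Ab {S : Type*} (u : FreeNil2 S) : FreeNil2Ab S :=
  Additive.ofMul (Abelianization.of u)

open scoped commutatorElement

section Abelianization

variable {G : Type*} [Group G]

def abClass (u : G) : Additive (Abelianization G) :=
  Additive.ofMul (Abelianization.of u)

@[simp] theorem abClass_mul (u v : G) : abClass (u * v) = abClass u + abClass v := by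
  simp only [abClass, map_mul, ofMul_mul]

@[simp] theorem abClass_one : abClass (1 : G) = 0 := by
  simp only [abClass, map_one, ofMul_one]

@[simp] theorem abClass_inv (u : G) : abClass u⁻¹ = -abClass u := by
  simp only [abClass, map_inv, ofMul_inv]

theorem abClass_map_eq_zero_of_mem_commutator {F : Type*} [Group F] (φ : F →* G) {x : F}
    (hx : x ∈ commutator F) : abClass (φ x) = 0 := by
  have h : Abelianization.of (φ x) = 1 :=
    Abelianization.commutator_subset_ker ((Abelianization.of).comp φ) hx
  rw [abClass, h, ofMul_one]

end Abelianization

theorem Subgroup.lowerCentralSeries_two_le_ker_iff {F H : Type*} [Group F] [Group H]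
    (ψ : F →* H) : (⊤ : Subgroup F).lowerCentralSeries 2 ≤ ψ.ker ↔
      ∀ x ∈ _root_.commutator F, ∀ y, Commute (ψ x) (ψ y) := by
  rw [lowerCentralSeries_succ, top_lowerCentralSeries_one, commutator_le]
  simp only [MonoidHom.mem_ker, map_commutatorElement, commutatorElement_eq_one_iff_commute,
    mem_top, forall_const]

/-- The central extension `A × G` of `G` by `A` with the 2-cocycle `(u, v) ↦ Φ (ū ⊗ v̄)`. -/
@[ext] structure BilinExt {G A : Type*} [Group G] [AddCommGroup A]
    (Φ : Additive (Abelianization G) ⊗[ℤ] Additive (Abelianization G) →ₗ[ℤ] A) where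
  a : A
  g : G

namespace BilinExt

variable {G A : Type*} [Group G] [AddCommGroup A]
  (Φ : Additive (Abelianization G) ⊗[ℤ] Additive (Abelianization G) →ₗ[ℤ] A)

noncomputable instance : Mul (BilinExt Φ) :=
  ⟨fun p q ↦ ⟨p.a + q.a + Φ (abClass p.g ⊗ₜ abClass q.g), p.g * q.g⟩⟩

instance : One (BilinExt Φ) := ⟨⟨0, 1⟩⟩

noncomputable instance : Inv (BilinExt Φ) :=
  ⟨fun p ↦ ⟨-p.a + Φ (abClass p.g ⊗ₜ abClass p.g), p.g⁻¹⟩⟩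

variable {Φ}

@[simp] theorem mul_a (p q : BilinExt Φ) :
    (p * q).a = p.a + q.a + Φ (abClass p.g ⊗ₜ abClass q.g) := rfl

@[simp] theorem mul_g (p q : BilinExt Φ) : (p * q).g = p.g * q.g := rfl

@[simp] theorem one_a : (1 : BilinExt Φ).a = 0 := rfl

@[simp] theorem one_g : (1 : BilinExt Φ).g = 1 := rfl

@[simp] theorem inv_a (p : BilinExt Φ) : p⁻¹.a = -p.a + Φ (abClass p.g ⊗ₜ abClass p.g) := rfl

@[simp] theorem inv_g (p : BilinExt Φ) : p⁻¹.g = p.g⁻¹ := rfl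

noncomputable instance : Group (BilinExt Φ) where
  mul_assoc p q r := by
    ext
    · simp only [mul_a, mul_g, abClass_mul, TensorProduct.add_tmul, TensorProduct.tmul_add,
        map_add]
      abel
    · exact mul_assoc p.g q.g r.g
  one_mul p := by ext <;> simp
  mul_one p := by ext <;> simp
  inv_mul_cancel p := by
    ext
    · simp only [mul_a, inv_a, inv_g, abClass_inv, TensorProduct.neg_tmul, map_neg, one_a]
      abel
    · exact inv_mul_cancel p.g

variable (Φ) in
def proj : BilinExt Φ →* G where
  toFun := g
  map_one' := rfl
  map_mul' _ _ := rfl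

theorem commute_of_commute_g {p q : BilinExt Φ} (h : Commute p.g q.g) (hp : abClass p.g = 0) :
    Commute p q := by
  ext
  · simp only [mul_a, hp, TensorProduct.zero_tmul, TensorProduct.tmul_zero, map_zero]
    abel
  · exact h.eq

theorem lowerCentralSeries_two_le_ker {F : Type*} [Group F] {ψ : F →* BilinExt Φ}
    (h : (⊤ : Subgroup F).lowerCentralSeries 2 ≤ ((proj Φ).comp ψ).ker) :
    (⊤ : Subgroup F).lowerCentralSeries 2 ≤ ψ.ker := by
  rw [Subgroup.lowerCentralSeries_two_le_ker_iff] at h ⊢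
  exact fun x hx y ↦ commute_of_commute_g (h x hx y)
    (abClass_map_eq_zero_of_mem_commutator ((proj Φ).comp ψ) hx)

theorem a_map_mul_of_section (σ : G →* BilinExt Φ) (hσ : ∀ u, (σ u).g = u) (u v : G) :
    (σ (u * v)).a = (σ u).a + (σ v).a + Φ (abClass u ⊗ₜ abClass v) := by
  rw [map_mul, mul_a, hσ, hσ]

noncomputable def sectionOf (f : G → A)
    (hf : ∀ u v, f (u * v) = f u + f v + Φ (abClass u ⊗ₜ abClass v)) :
    G →* BilinExt Φ :=
  MonoidHom.mk' (fun u ↦ ⟨f u, u⟩) fun u v ↦ BilinExt.ext (hf u v) rfl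

end BilinExt

namespace FreeNil2

variable {S : Type*}

theorem hom_ext {H : Type*} [Monoid H] {φ ψ : FreeNil2 S →* H}
    (h : ∀ s, φ (QuotientGroup.mk (FreeGroup.of s)) = ψ (QuotientGroup.mk (FreeGroup.of s))) :
    φ = ψ :=
  QuotientGroup.monoidHom_ext _ (FreeGroup.ext_hom _ _ h)

variable {A : Type*} [AddCommGroup A]

noncomputable def bilinExtSection (f₀ : S → A)
    (Φ : FreeNil2Ab S ⊗[ℤ] FreeNil2Ab S →ₗ[ℤ] A) : FreeNil2 S →* BilinExt Φ :=
  QuotientGroup.lift _ (FreeGroup.lift fun s ↦ ⟨f₀ s, QuotientGroup.mk (FreeGroup.of s)⟩) <|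
    BilinExt.lowerCentralSeries_two_le_ker <| by
      rw [show (BilinExt.proj Φ).comp (FreeGroup.lift _) = QuotientGroup.mk' _ from
        FreeGroup.ext_hom _ _ fun _ ↦ rfl, QuotientGroup.ker_mk']

@[simp] theorem bilinExtSection_of (f₀ : S → A) (Φ : FreeNil2Ab S ⊗[ℤ] FreeNil2Ab S →ₗ[ℤ] A)
    (s : S) : bilinExtSection f₀ Φ (QuotientGroup.mk (FreeGroup.of s)) =
      ⟨f₀ s, QuotientGroup.mk (FreeGroup.of s)⟩ :=
  FreeGroup.lift_apply_of

theorem bilinExtSection_g (f₀ : S → A) (Φ : FreeNil2Ab S ⊗[ℤ] FreeNil2Ab S →ₗ[ℤ] A)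
    (u : FreeNil2 S) : (bilinExtSection f₀ Φ u).g = u :=
  DFunLike.congr_fun (hom_ext (φ := (BilinExt.proj Φ).comp (bilinExtSection f₀ Φ))
    (ψ := MonoidHom.id _) fun s ↦ by rw [MonoidHom.comp_apply, bilinExtSection_of]; rfl) u

end FreeNil2

/-- Given a set `S`, an abelian group `A`, a map `f₀ : S → A` and a homomorphism
`Φ : ℤ[S] ⊗ ℤ[S] → A`, there is a unique quadratic map `f : ⟨S⟩ⁿⁱˡ → A` with
`f(s) = f₀(s)` and `f(u+v) = f(u) + f(v) + Φ(û ⊗ v̂)`. -/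
theorem freeNil2_quadratic_extension (S : Type*) {A : Type*} [AddCommGroup A]
    (f₀ : S → A) (Φ : (FreeNil2Ab S) ⊗[ℤ] (FreeNil2Ab S) →ₗ[ℤ] A) :
    ∃! f : FreeNil2 S → A,
      (∀ s : S, f (QuotientGroup.mk (FreeGroup.of s)) = f₀ s) ∧
      (∀ u v : FreeNil2 S, f (u * v) = f u + f v + Φ (nil2Ab u ⊗ₜ[ℤ] nil2Ab v)) := by
  refine ⟨fun u ↦ (FreeNil2.bilinExtSection f₀ Φ u).a,
    ⟨fun s ↦ congrArg BilinExt.a (FreeNil2.bilinExtSection_of f₀ Φ s),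
      BilinExt.a_map_mul_of_section _ (FreeNil2.bilinExtSection_g f₀ Φ)⟩, ?_⟩
  rintro f ⟨hf₀, hf⟩
  have hσ : BilinExt.sectionOf f hf = FreeNil2.bilinExtSection f₀ Φ :=
    FreeNil2.hom_ext fun s ↦ by rw [FreeNil2.bilinExtSection_of, ← hf₀]; rfl
  funext u
  exact congrArg BilinExt.a (DFunLike.congr_fun hσ u)
end

section
/- For any square group M and any abelian group A, there is a natural bijection between square-group morphisms A^⊗ → M and group homomorphisms A → M_ee. Explicitly, a homomorphism g : A → M_ee corresponds to the morphism f with f_e(a) = P(g(a)) and f_ee(a,b) = g(a) + T(g(b)), where T = HP - Id. -/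
/-- The pair `(fe, fee)` is a morphism of square groups `A^⊗ → M`, where for an abelian
group `A` the square group `A^⊗` has e-level `A`, ee-level `A ⊕ A`, `P(a,b) = a + b`
and `H(a) = (a,a)`. -/
def IsMorphismFromTensorSG {Me : Type*} [AddGroup Me] {Mee : Type*} [AddCommGroup Mee]
    (P : Mee →+ Me) (H : Me → Mee) {A : Type*} [AddCommGroup A]
    (fe : A → Me) (fee : A × A → Mee) : Prop :=
  (∀ a b : A, fe (a + b) = fe a + fe b) ∧
  (∀ u v : A × A, fee (u + v) = fee u + fee v) ∧
  (∀ a b : A, fe (a + b) = P (fee (a, b))) ∧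
  (∀ a : A, fee (a, a) = H (fe a))

/-- For any square group `M` and abelian group `A`, morphisms of square groups `A^⊗ → M`
correspond bijectively to homomorphisms `A → M_ee`:  `g` corresponds to
`fe(a) = P(g(a))`, `fee(a,b) = g(a) + T(g(b))` with `T = HP - Id`. -/
theorem tensorSquareGroup_hom_equiv {Me : Type*} [AddGroup Me] {Mee : Type*} [AddCommGroup Mee]
    (P : Mee →+ Me) (H : Me → Mee) (hsq : IsSquareGroup P H)
    (A : Type*) [AddCommGroup A] :
    (∀ g : A →+ Mee,
      IsMorphismFromTensorSG P H (fun a => P (g a))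
        (fun u => g u.1 + (H (P (g u.2)) - g u.2))) ∧
    (∀ (fe : A → Me) (fee : A × A → Mee), IsMorphismFromTensorSG P H fe fee →
      ∃! g : A →+ Mee,
        (∀ a : A, fe a = P (g a)) ∧
        (∀ u : A × A, fee u = g u.1 + (H (P (g u.2)) - g u.2))) := by

  have hH0 : H 0 = 0 := by
    have h := hsq.cross_P_left 0 0
    simp [crossEff] at h
    exact h
  have hHP : ∀ (a : Mee) (y : Me), H (P a + y) = H (P a) + H y := by
    intro a y
    have h := hsq.cross_P_left a y
    unfold crossEff at h
    rw [sub_sub, sub_eq_zero] at h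
    exact h
  constructor
  · intro g
    refine ⟨?_, ?_, ?_, ?_⟩
    · intro a b; simp [map_add]
    · intro u v
      simp only [Prod.fst_add, Prod.snd_add, map_add, hHP (g u.2) (P (g v.2))]
      abel
    · intro a b
      simp only [map_add, map_sub, hsq.PHP, add_sub_cancel_right]
    · intro a
      simp only
      abel_nf
  · intro fe fee ⟨h1, h2, h3, h4⟩
    have gadd : ∀ a b : A, fee (a + b, 0) = fee (a, 0) + fee (b, 0) := by
      intro a b
      have := h2 (a, 0) (b, 0)
      simpa using this
    refine ⟨AddMonoidHom.mk' (fun a => fee (a, 0)) gadd, ⟨?_, ?_⟩, ?_⟩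
    · intro a
      have := h3 a 0
      simpa using this
    · intro u
      obtain ⟨a, b⟩ := u
      have hfeb : fe b = P (fee (b, 0)) := by simpa using h3 b 0
      have hsplit : fee (a, b) = fee (a, 0) + fee (0, b) := by
        have := h2 (a, 0) (0, b)
        simpa using this
      have hbb : fee (b, 0) + fee (0, b) = H (P (fee (b, 0))) := by
        have := h2 (b, 0) (0, b)
        simp only [Prod.mk_add_mk, add_zero, zero_add] at this
        rw [← this, h4 b, hfeb]
      have h0b : fee (0, b) = H (P (fee (b, 0))) - fee (b, 0) := by
        rw [← hbb]; abel
      simp only [AddMonoidHom.mk'_apply]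
      rw [hsplit, h0b]
    · intro g' ⟨hg1, hg2⟩
      ext a
      have := hg2 (a, 0)
      simp [map_zero, hH0] at this
      simp [this]
end

section
/- Let M and N be square groups. Then in the e-level of M ⊙ N, for any x ∈ M_e and b ∈ N_ee one has HPH(x) ⊗̄ b = H(x) ⊗̄ (b - T(b)). -/
/-- In the e-level of the tensor product `M ⊙ N` of two square groups (formalized here as:
in any group `C` with symbols `x ⊙ y` and central bilinear symbols `a ⊗̄ b` satisfying the
defining relations of `M ⊙ N`), for `x ∈ M_e` and `b ∈ N_ee` one has
`HPH(x) ⊗̄ b = H(x) ⊗̄ (b - T(b))`. -/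
theorem squareGroup_tensor_HPH_identity
    {Me : Type*} [AddGroup Me] {Mee : Type*} [AddCommGroup Mee]
    {Ne : Type*} [AddGroup Ne] {Nee : Type*} [AddCommGroup Nee]
    (PM : Mee →+ Me) (HM : Me → Mee) (hM : IsSquareGroup PM HM)
    (PN : Nee →+ Ne) (HN : Ne → Nee) (hN : IsSquareGroup PN HN)
    (TM : Mee → Mee) (hTM : ∀ a, TM a = HM (PM a) - a)
    (TN : Nee → Nee) (hTN : ∀ b, TN b = HN (PN b) - b)
    (ΔN : Ne → Nee) (hΔN : ∀ y, ΔN y = HN (PN (HN y)) - 2 • HN y + crossEff HN y y)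
    {C : Type*} [AddGroup C] (sm : Me → Ne → C) (br : Mee → Nee → C)
    (hbr_central : ∀ (a : Mee) (b : Nee) (u : C), u + br a b = br a b + u)
    (hbr_addl : ∀ (a a' : Mee) (b : Nee), br (a + a') b = br a b + br a' b)
    (hbr_addr : ∀ (a : Mee) (b b' : Nee), br a (b + b') = br a b + br a b')
    (hsm_r : ∀ (x : Me) (y₁ y₂ : Ne), sm x (y₁ + y₂) = sm x y₁ + sm x y₂)
    (hsm_l : ∀ (x₁ x₂ : Me) (y : Ne),
      sm (x₁ + x₂) y = sm x₁ y + sm x₂ y + br (crossEff HM x₂ x₁) (HN y))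
    (hsm_P : ∀ (x : Me) (b : Nee), sm x (PN b) = br (crossEff HM x x) b)
    (hP_sm : ∀ (a : Mee) (y : Ne), sm (PM a) y = br a (ΔN y))
    (hTTbr : ∀ (a : Mee) (b : Nee), br (TM a) (TN b) = -br a b) :
    ∀ (x : Me) (b : Nee), br (HM (PM (HM x))) b = br (HM x) (b - TN b) := by
  intro x b
  -- basic facts about br
  have hbr0 : ∀ a : Mee, br a 0 = 0 := by
    intro a
    have h := hbr_addr a 0 0
    rw [add_zero] at h
    nth_rewrite 1 [← add_zero (br a 0)] at h
    exact (add_left_cancel h).symm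
  have hbrneg : ∀ (a : Mee) (b : Nee), br a (-b) = -br a b := by
    intro a b
    have h : br a b + br a (-b) = 0 := by
      rw [← hbr_addr, add_neg_cancel, hbr0]
    exact eq_neg_of_add_eq_zero_right h
  -- TN is an involution
  have hTinv : TN (TN b) = b := by
    have hPNT : PN (TN b) = PN b := by
      rw [hTN, map_sub, hN.PHP, add_sub_cancel_right]
    rw [hTN (TN b), hPNT, hTN b]
    abel
  -- key application of hTTbr
  have key : br (TM (HM x)) b = -br (HM x) (TN b) := by
    have h := hTTbr (HM x) (TN b)
    rwa [hTinv] at h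
  -- decompose HM (PM (HM x))
  have hdec : HM (PM (HM x)) = TM (HM x) + HM x := by
    rw [hTM]; abel
  rw [hdec, hbr_addl, key, sub_eq_add_neg, hbr_addr, hbrneg,
    hbr_central (HM x) b (-br (HM x) (TN b))]
end

section
/- Let R be a commutative quadratic ring. The assignment x ↦ H(x)·T(H(x)) ∈ Ker(P) induces a well-defined quadratic map ψ : Coker(P) → Ker(P : R_ee/(Id - T) → R_e) satisfying ψ(x̄ + ȳ) = ψ(x̄) + ψ(ȳ) - k(x)·k(y) and ψ(x̄·ȳ) = k(x²)·ψ(ȳ) + ψ(x̄)·k(y²), where k(x) is the class of Δ(x) = (x|x)_H - H(x) + TH(x) in R_ee/(Id - T). -/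
/-- For a commutative quadratic ring `R`, the assignment `ψ₀(x) = H(x)·T(H(x))` lies in
`Ker(P)` and induces a well-defined quadratic map
`ψ : Coker(P) → Ker(P : R_ee/(Id - T) → R_e)` with
`ψ(x̄+ȳ) = ψ(x̄) + ψ(ȳ) - k(x)k(y)` and `ψ(x̄ȳ) = k(x²)ψ(ȳ) + ψ(x̄)k(y²)`,
where `k(x)` is the class of `Δ(x)` modulo `(Id - T)`.
(All equalities in `R_ee/(Id - T)` are stated as congruences modulo the subgroup `W`
generated by the elements `a - T(a)`.) -/
theorem commQuadraticRing_psi {Re : Type*} [AddGroup Re] [Monoid Re]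
    {Ree : Type*} [Ring Ree]
    (P : Ree →+ Re) (H : Re → Ree) (hsq : IsSquareGroup P H)
    (T : Ree → Ree) (hT : ∀ a, T a = H (P a) - a)
    (Δ : Re → Ree) (hΔ : ∀ x, Δ x = crossEff H x x - H x + T (H x))
    -- quadratic ring axioms
    (hdistl : ∀ x y z : Re, x * (y + z) = x * y + x * z)
    (hdistr : ∀ x y z : Re, (x + y) * z = x * z + y * z + P (crossEff H y x * H z))
    (hcr_mul : ∀ x y u v : Re,
      crossEff H x y * crossEff H u v = crossEff H (x * u) (y * v))
    (hT_mul : ∀ a b : Ree, T (a * b) + T a * T b = 0)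
    (hPl : ∀ (a : Ree) (x : Re), P (a * Δ x) = P a * x)
    (hPr : ∀ (x : Re) (a : Ree), P (crossEff H x x * a) = x * P a)
    (hH_mul : ∀ x y : Re, H (x * y) = crossEff H x x * H y + H x * Δ y)
    -- commutativity
    (hcomm_ee : ∀ a b : Ree, a * b = b * a)
    (hcomm_e : ∀ x y : Re, y * x = x * y - P (H x * T (H y)))
    -- ψ₀ and the subgroup (Id - T)(R_ee)
    (ψ₀ : Re → Ree) (hψ₀ : ∀ x, ψ₀ x = H x * T (H x))
    (W : AddSubgroup Ree) (hW : W = AddSubgroup.closure {c : Ree | ∃ a, c = a - T a}) :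
    (∀ x : Re, P (ψ₀ x) = 0) ∧
    (∀ (x : Re) (a : Ree), ψ₀ (x + P a) - ψ₀ x ∈ W) ∧
    (∀ x y : Re, ψ₀ (x + y) - (ψ₀ x + ψ₀ y - Δ x * Δ y) ∈ W) ∧
    (∀ x y : Re, ψ₀ (x * y) - (Δ (x * x) * ψ₀ y + ψ₀ x * Δ (y * y)) ∈ W) := by

  obtain ⟨cal, car, cpl, cpr, pc, php⟩ := hsq
  letI : CommRing Ree := { (inferInstance : Ring Ree) with mul_comm := hcomm_ee }
  -- basic facts
  have hH0 : H (0 : Re) = 0 := by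
    have h1 := cpl 0 (0 : Re)
    rw [map_zero] at h1
    unfold crossEff at h1
    rw [add_zero] at h1
    linear_combination -h1
  have hHP_add : ∀ a b : Ree, H (P (a + b)) = H (P a) + H (P b) := by
    intro a b
    have h1 := cpl a (P b)
    unfold crossEff at h1
    rw [map_add]
    linear_combination h1
  have hT_add : ∀ a b : Ree, T (a + b) = T a + T b := by
    intro a b; rw [hT, hT, hT, hHP_add]; ring
  have hT0 : T (0 : Ree) = 0 := by rw [hT, map_zero, hH0]; ring
  have hT_neg : ∀ a : Ree, T (-a) = -T a := by
    intro a
    have h1 := hT_add a (-a)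
    rw [add_neg_cancel, hT0] at h1
    linear_combination -h1
  have hT_sub : ∀ a b : Ree, T (a - b) = T a - T b := by
    intro a b; rw [sub_eq_add_neg, hT_add, hT_neg]; ring
  have hPT : ∀ a : Ree, P (T a) = P a := by
    intro a; rw [hT, map_sub, php, add_sub_cancel_right]
  have hHPa : ∀ a : Ree, H (P a) = T a + a := by
    intro a; rw [hT a]; ring
  have hTT : ∀ a : Ree, T (T a) = a := by
    intro a; rw [hT (T a), hPT, hHPa]; ring
  have hTmul : ∀ a b : Ree, T (a * b) = -(T a * T b) := by
    intro a b; linear_combination hT_mul a b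
  have hmemW : ∀ u : Ree, u - T u ∈ W := by
    intro u; rw [hW]; exact AddSubgroup.subset_closure ⟨u, rfl⟩
  have hPcc : ∀ x : Re, P (crossEff H x x) = 0 := by
    intro x
    rw [pc]
    rw [show (-x - x + x + x : Re) = -x + (-x + x) + x by
      simp [sub_eq_add_neg, add_assoc]]
    rw [neg_add_cancel, add_zero, neg_add_cancel]
  have hTcc : ∀ x : Re, T (crossEff H x x) = -crossEff H x x := by
    intro x; rw [hT, hPcc, hH0]; ring
  have hTΔ : ∀ x : Re, T (Δ x) = -Δ x := by
    intro x; rw [hΔ x, hT_add, hT_sub, hTcc, hTT]; ring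
  have hHadd : ∀ x y : Re, H (x + y) = H x + H y + crossEff H x y := by
    intro x y; unfold crossEff; ring
  have hHxPa : ∀ (x : Re) (a : Ree), H (x + P a) = H x + (T a + a) := by
    intro x a
    have h1 := cpr x a
    unfold crossEff at h1
    rw [← hHPa]
    linear_combination h1
  have hyx : ∀ x y : Re, crossEff H y x = -(T (crossEff H x y)) := by
    intro x y
    have hsum : y + x = (x + y) + P (crossEff H y x) := by
      rw [pc]
      simp [sub_eq_add_neg, add_assoc, add_neg_cancel_left, neg_add_cancel_left]
    have h2 : H (y + x) = H (x + y) + (T (crossEff H y x) + crossEff H y x) := by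
      rw [hsum, hHxPa]
    have h4 : T (crossEff H y x) = -(crossEff H x y) := by
      have h5 : crossEff H y x
          = H (x + y) + (T (crossEff H y x) + crossEff H y x) - H y - H x := by
        rw [← h2]; rfl
      linear_combination -h5 - hHadd x y
    calc crossEff H y x = T (T (crossEff H y x)) := (hTT _).symm
    _ = T (-(crossEff H x y)) := by rw [h4]
    _ = -(T (crossEff H x y)) := hT_neg _
  have hTHmul : ∀ x y : Re,
      T (H (x * y)) = crossEff H x x * T (H y) + T (H x) * Δ y := by
    intro x y
    rw [hH_mul, hT_add, hTmul, hTmul, hTcc, hTΔ]; ring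
  have hΔmul : ∀ x y : Re, Δ (x * y) = Δ x * Δ y := by
    intro x y
    rw [hΔ (x * y), hTHmul, hH_mul, ← hcr_mul x x y y, hΔ x, hΔ y]
    ring
  refine ⟨?_, ?_, ?_, ?_⟩
  · -- P (ψ₀ x) = 0
    intro x
    have h1 := hcomm_e x x
    rw [hψ₀]
    have h2 : x * x - P (H x * T (H x)) = x * x := h1.symm
    rwa [sub_eq_self] at h2
  · -- ψ₀ (x + P a) - ψ₀ x ∈ W
    intro x a
    have k1 : T (H x * (a + T a)) = -(T (H x) * (a + T a)) := by
      rw [hTmul, hT_add, hTT]; ring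
    have k2 : T (a * a) = -(T a * T a) := hTmul a a
    have k3 : T (a * T a) = -(T a * a) := by rw [hTmul, hTT]
    have m1 := hmemW (H x * (a + T a)); rw [k1] at m1
    have m2 := hmemW (a * a); rw [k2] at m2
    have m3 := hmemW (a * T a); rw [k3] at m3
    have hTH : T (H x + (T a + a)) = T (H x) + (a + T a) := by
      rw [hT_add, hT_add, hTT]
    have e : ψ₀ (x + P a) - ψ₀ x =
        (H x * (a + T a) - -(T (H x) * (a + T a))) +
        ((a * a - -(T a * T a)) + (a * T a - -(T a * a))) := by
      rw [hψ₀, hψ₀, hHxPa, hTH]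
      ring
    rw [e]
    exact add_mem m1 (add_mem m2 m3)
  · -- additivity up to k(x)k(y)
    intro x y
    have hTHxy : T (H (x + y)) = T (H x) + T (H y) + T (crossEff H x y) := by
      rw [hHadd, hT_add, hT_add]
    have k1 : T (H y * T (H x)) = -(T (H y) * H x) := by rw [hTmul, hTT]
    have k2 : T (crossEff H x y * T (H x)) = -(T (crossEff H x y) * H x) := by
      rw [hTmul, hTT]
    have k3 : T (crossEff H x y * T (H y)) = -(T (crossEff H x y) * H y) := by
      rw [hTmul, hTT]
    have m1 := hmemW (H y * T (H x)); rw [k1] at m1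
    have m2 := hmemW (crossEff H x y * T (H x)); rw [k2] at m2
    have m3 := hmemW (crossEff H x y * T (H y)); rw [k3] at m3
    have m4 := neg_mem (hmemW (H (x * y)))
    have hctc : crossEff H x y * T (crossEff H x y)
        = -(crossEff H x x * crossEff H y y) := by
      have h1 : y * x = x * y + P (-(H x * T (H y))) := by
        rw [map_neg, hcomm_e x y, sub_eq_add_neg]
      have h2 : crossEff H (x * y) (y * x) = crossEff H (x * y) (x * y) := by
        rw [h1, car, cpr, add_zero]
      have h3 := hcr_mul x y y x
      have h4 := hcr_mul x x y y
      have h5 : T (crossEff H x y) = -(crossEff H y x) := by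
        linear_combination hyx x y
      rw [h5]
      calc crossEff H x y * -(crossEff H y x)
          = -(crossEff H (x * y) (y * x)) := by rw [← h3]; ring
      _ = -(crossEff H x x * crossEff H y y) := by rw [h2, ← h4]
    have h6 : Δ x * Δ y
        = crossEff H x x * crossEff H y y - H (x * y) + T (H (x * y)) := by
      rw [← hΔmul, hΔ (x * y), ← hcr_mul x x y y]
    have hkey : crossEff H x y * T (crossEff H x y) + Δ x * Δ y
        = T (H (x * y)) - H (x * y) := by
      rw [hctc, h6]; ring
    have e : ψ₀ (x + y) - (ψ₀ x + ψ₀ y - Δ x * Δ y) =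
        (H y * T (H x) - -(T (H y) * H x)) +
        ((crossEff H x y * T (H x) - -(T (crossEff H x y) * H x)) +
         ((crossEff H x y * T (H y) - -(T (crossEff H x y) * H y)) +
          (-(H (x * y) - T (H (x * y)))))) := by
      rw [hψ₀ (x + y), hψ₀ x, hψ₀ y, hTHxy, hHadd]
      linear_combination hkey
    rw [e]
    exact add_mem m1 (add_mem m2 (add_mem m3 m4))
  · -- multiplicativity
    intro x y
    have hΔxx : Δ (x * x)
        = crossEff H x x * crossEff H x x - H (x * x) + T (H (x * x)) := by
      rw [hΔ (x * x), ← hcr_mul x x x x]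
    have hΔyy' : Δ y * Δ y
        = crossEff H y y * crossEff H y y - H (y * y) + T (H (y * y)) := by
      rw [← hΔmul, hΔ (y * y), ← hcr_mul y y y y]
    have k1 : T (crossEff H x x * Δ y * (H y * T (H x)))
        = -(crossEff H x x * Δ y * (T (H y) * H x)) := by
      rw [hTmul (crossEff H x x * Δ y) (H y * T (H x)),
        hTmul (crossEff H x x) (Δ y), hTmul (H y) (T (H x)), hTcc, hTΔ, hTT]
      ring
    have k2 : T (H (x * x) * (H y * T (H y)))
        = T (H (x * x)) * (T (H y) * H y) := by
      rw [hTmul (H (x * x)) (H y * T (H y)), hTmul (H y) (T (H y)), hTT]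
      ring
    have m1 := hmemW (crossEff H x x * Δ y * (H y * T (H x))); rw [k1] at m1
    have m2 := hmemW (H (x * x) * (H y * T (H y))); rw [k2] at m2
    have e : ψ₀ (x * y) - (Δ (x * x) * ψ₀ y + ψ₀ x * Δ (y * y)) =
        (crossEff H x x * Δ y * (H y * T (H x))
          - -(crossEff H x x * Δ y * (T (H y) * H x))) +
        (H (x * x) * (H y * T (H y)) - T (H (x * x)) * (T (H y) * H y)) := by
      rw [hψ₀ (x * y), hψ₀ x, hψ₀ y, hTHmul x y, hH_mul x y, hΔxx, hΔmul y y]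
      ring
    rw [e]
    exact add_mem m1 m2
end

section
/- Let F : Nil → Nil be a functor on the category of nilpotent groups of class two which preserves finite coproducts and satisfies F(0) = 0. Then F is quadratic, i.e., the second cross-effect F(X|Y) = Ker(F(X ∨ Y) → F(X) × F(Y)) is linear (additive) in each variable X and Y. -/
open CategoryTheory Limits
open scoped commutatorElement

/-- The category of groups of nilpotence class two. -/
abbrev NilCat : Type _ :=
  CategoryTheory.ObjectProperty.FullSubcategory (fun G : GrpCat => ∀ x y z : G, ⁅⁅x, y⁆, z⁆ = 1)

/-- The trivial nil₂-group. -/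
def NilCat.triv : NilCat :=
  ⟨GrpCat.of PUnit, fun _ _ _ => Subsingleton.elim _ _⟩

/-- Application of a morphism of `NilCat`. -/
def NilCat.app {X Y : NilCat} (f : X ⟶ Y) (g : X.obj) : Y.obj :=
  f.hom.hom g

/-- The trivial morphism between two objects of `NilCat`. -/
def NilCat.zeroHom (X Y : NilCat) : X ⟶ Y :=
  ObjectProperty.homMk (GrpCat.ofHom (1 : X.obj →* Y.obj))

variable [HasBinaryCoproducts NilCat]

/-- The retraction `X ∨ Y → X` of the coproduct onto its first factor. -/
noncomputable def NilCat.retr₁ (X Y : NilCat) : (X ⨿ Y) ⟶ X :=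
  coprod.desc (𝟙 X) (NilCat.zeroHom Y X)

/-- The retraction `X ∨ Y → Y` of the coproduct onto its second factor. -/
noncomputable def NilCat.retr₂ (X Y : NilCat) : (X ⨿ Y) ⟶ Y :=
  coprod.desc (NilCat.zeroHom X Y) (𝟙 Y)

/-- The second cross-effect `F(X|Y)`: the kernel of `F(X ∨ Y) → F(X) × F(Y)`. -/
noncomputable def crossEffectSet (F : NilCat ⥤ NilCat) (X Y : NilCat) :
    Set ((F.obj (X ⨿ Y)).obj) :=
  {g | NilCat.app (F.map (NilCat.retr₁ X Y)) g = 1 ∧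
       NilCat.app (F.map (NilCat.retr₂ X Y)) g = 1}

/-!
Because `F` preserves coproducts, `F(X ∨ Y)` is generated by the images of `ι₁ = F(inl)` and
`ι₂ = F(inr)`, so, being of class two, its subgroup `F(X|Y)` lies in the central subgroup
generated by the commutators `⁅ι₁ a, ι₂ b⁆`. For `a ∈ F(X₁ ∨ X₂)`, the map `a ↦ ⁅ι₁ a, ι₂ b⁆`
is a homomorphism into the centre, and `F(X₁ ∨ X₂)` is generated by `F X₁` and `F X₂`; hence
the two endomorphisms induced by the idempotents `X₁ ∨ X₂ → Xᵢ → X₁ ∨ X₂` multiply to the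
identity on these commutators, and so on all of `F(X₁ ∨ X₂ | Y)`. Thus every element of
`F(X₁ ∨ X₂ | Y)` is the product of the images of its components in `F(X₁|Y)` and `F(X₂|Y)`,
which gives the bijection. Linearity in the second variable follows through the symmetry
`X ∨ Y ≅ Y ∨ X`.
-/
open Subgroup

section ClassTwo

omit [HasBinaryCoproducts NilCat]

variable {G H : Type*} [Group G] [Group H]

theorem Subgroup.normal_of_le_center {N : Subgroup G} (hN : N ≤ center G) : N.Normal :=
  ⟨fun n hn g => by rwa [mem_center_iff.1 (hN hn) g, mul_inv_cancel_right]⟩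

theorem MonoidHom.map_mem_commutator (f : G →* H) {x : G} (hx : x ∈ commutator G) :
    f x ∈ commutator H := by
  rw [commutator_def] at hx ⊢
  have := mem_map_of_mem f hx
  rw [map_commutator] at this
  exact commutator_mono le_top le_top this

theorem closure_commutatorElement_le_commutator {A B : Type*} (f : A → G) (g : B → G) :
    closure {x | ∃ a b, ⁅f a, g b⁆ = x} ≤ commutator G := by
  rw [commutator_eq_closure]
  exact closure_mono fun _ ⟨a, b, h⟩ => ⟨f a, g b, h⟩

theorem commute_of_mem_commutator_of_class_two (h2 : ∀ x y z : G, ⁅⁅x, y⁆, z⁆ = 1) {x : G}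
    (hx : x ∈ commutator G) (y : G) : Commute x y := by
  rw [commutator_eq_closure] at hx
  induction hx using closure_induction with
  | mem _ hx =>
    obtain ⟨a, b, rfl⟩ := hx
    exact commutatorElement_eq_one_iff_commute.1 (h2 a b y)
  | one => exact Commute.one_left y
  | mul _ _ _ _ ha hb => exact ha.mul_left hb
  | inv _ _ ha => exact ha.inv_left

theorem commutatorElement_mul_left_of_class_two (h2 : ∀ x y z : G, ⁅⁅x, y⁆, z⁆ = 1)
    (a b c : G) : ⁅a * b, c⁆ = ⁅a, c⁆ * ⁅b, c⁆ := by
  have hcomm := commutatorElement_eq_one_iff_commute.1 (h2 b c a)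
  calc ⁅a * b, c⁆ = a * ⁅b, c⁆ * a⁻¹ * ⁅a, c⁆ := by simp only [commutatorElement_def]; group
    _ = ⁅a, c⁆ * ⁅b, c⁆ := by
      rw [← hcomm.eq, mul_inv_cancel_right, (commutatorElement_eq_one_iff_commute.1 (h2 b c _)).eq]

def commutatorElementLeftHom (h2 : ∀ x y z : G, ⁅⁅x, y⁆, z⁆ = 1) (y : G) : G →* G where
  toFun x := ⁅x, y⁆
  map_one' := commutatorElement_one_left y
  map_mul' a b := commutatorElement_mul_left_of_class_two h2 a b y

theorem map_mul_map_eq_of_mem_closure {s : Set G} {φ ψ χ : G →* H}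
    (hcomm : ∀ x ∈ closure s, ∀ y ∈ closure s, Commute (ψ x) (φ y))
    (hs : ∀ x ∈ s, φ x * ψ x = χ x) {x : G} (hx : x ∈ closure s) : φ x * ψ x = χ x := by
  induction hx using closure_induction with
  | mem x hx => exact hs x hx
  | one => simp
  | mul x y hx hy ihx ihy =>
    calc φ (x * y) * ψ (x * y) = φ x * (ψ x * φ y) * ψ y := by
          rw [map_mul, map_mul, (hcomm x hx y hy).eq]; group
      _ = χ (x * y) := by rw [map_mul, ← ihx, ← ihy]; group
  | inv x hx ihx =>
    rw [map_inv, map_inv, map_inv, ← ihx, ← mul_inv_rev, (hcomm x hx x hx).eq]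

/-- The part of the central extension `A^ab ⊗ B^ab ↣ A ∨ B ↠ A × B` that the argument needs. -/
theorem mem_closure_commutatorElement_of_retractions {A B : Type*} [Group A] [Group B]
    (h2 : ∀ x y z : G, ⁅⁅x, y⁆, z⁆ = 1) (ι₁ : A →* G) (ι₂ : B →* G) (r₁ : G →* A) (r₂ : G →* B)
    (hr₁ : ∀ a, r₁ (ι₁ a) = a) (hr₂ : ∀ b, r₂ (ι₂ b) = b)
    (hr₁₂ : ∀ b, r₁ (ι₂ b) = 1) (hr₂₁ : ∀ a, r₂ (ι₁ a) = 1)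
    (hgen : closure (Set.range ι₁ ∪ Set.range ι₂) = ⊤) {g : G} (hg₁ : r₁ g = 1) (hg₂ : r₂ g = 1) :
    g ∈ closure {x | ∃ a b, ⁅ι₁ a, ι₂ b⁆ = x} := by
  set Z := closure {x | ∃ a b, ⁅ι₁ a, ι₂ b⁆ = x}
  have hZ : Z ≤ center G := fun z hz => mem_center_iff.2 fun g =>
    (commute_of_mem_commutator_of_class_two h2
      (closure_commutatorElement_le_commutator _ _ hz) g).eq.symm
  have := normal_of_le_center hZ
  let π := QuotientGroup.mk' Z
  have hcomm : ∀ a b, Commute ((π.comp ι₁) a) ((π.comp ι₂) b) := fun a b => by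
    rw [← commutatorElement_eq_one_iff_commute, MonoidHom.comp_apply, MonoidHom.comp_apply,
      ← map_commutatorElement, QuotientGroup.mk'_apply, QuotientGroup.eq_one_iff]
    exact subset_closure ⟨a, b, rfl⟩
  have hπ : (MonoidHom.noncommCoprod _ _ hcomm).comp (r₁.prod r₂) = π := by
    refine MonoidHom.eq_of_eqOn_dense hgen ?_
    rintro _ (⟨a, rfl⟩ | ⟨b, rfl⟩) <;> simp [hr₁, hr₂, hr₁₂, hr₂₁]
  rw [← QuotientGroup.eq_one_iff (N := Z)]
  change π g = 1
  rw [← hπ, MonoidHom.comp_apply, MonoidHom.prod_apply, hg₁, hg₂, Prod.mk_one_one, map_one]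

end ClassTwo

namespace NilCat

section

omit [HasBinaryCoproducts NilCat]

theorem app_one {X Y : NilCat} (f : X ⟶ Y) : app f 1 = 1 := map_one f.hom.hom

theorem app_mul {X Y : NilCat} (f : X ⟶ Y) (x y : X.obj) : app f (x * y) = app f x * app f y :=
  map_mul f.hom.hom x y

theorem zeroHom_comp {X Y Z : NilCat} (f : Y ⟶ Z) : zeroHom X Y ≫ f = zeroHom X Z :=
  ObjectProperty.hom_ext _ (GrpCat.hom_ext (MonoidHom.ext fun _ => map_one f.hom.hom))

theorem comp_zeroHom {X Y Z : NilCat} (f : X ⟶ Y) : f ≫ zeroHom Y Z = zeroHom X Z := rfl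

def ofSubgroup {X : NilCat} (H : Subgroup X.obj) : NilCat :=
  ⟨GrpCat.of H, fun x y z => Subtype.ext (X.property x y z)⟩

theorem closure_range_inl_union_range_inr {X Y : NilCat} {c : BinaryCofan X Y}
    (hc : IsColimit c) : closure (Set.range (app c.inl) ∪ Set.range (app c.inr)) = ⊤ := by
  set H := closure (Set.range (app c.inl) ∪ Set.range (app c.inr))
  let incl : ofSubgroup H ⟶ c.pt := ObjectProperty.homMk (GrpCat.ofHom H.subtype)
  let lift₁ : X ⟶ ofSubgroup H := ObjectProperty.homMk (GrpCat.ofHom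
    (c.inl.hom.hom.codRestrict H fun x => subset_closure (Or.inl ⟨x, rfl⟩)))
  let lift₂ : Y ⟶ ofSubgroup H := ObjectProperty.homMk (GrpCat.ofHom
    (c.inr.hom.hom.codRestrict H fun y => subset_closure (Or.inr ⟨y, rfl⟩)))
  have hsection : BinaryCofan.IsColimit.desc hc lift₁ lift₂ ≫ incl = 𝟙 c.pt :=
    BinaryCofan.IsColimit.hom_ext hc (by rw [BinaryCofan.IsColimit.inl_desc_assoc]; rfl)
      (by rw [BinaryCofan.IsColimit.inr_desc_assoc]; rfl)
  refine eq_top_iff.2 fun g _ => ?_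
  rw [← show app (BinaryCofan.IsColimit.desc hc lift₁ lift₂ ≫ incl) g = g by rw [hsection]; rfl]
  exact (app (BinaryCofan.IsColimit.desc hc lift₁ lift₂) g).2

variable (F : NilCat ⥤ NilCat)

theorem app_map_app_map {X Y Z : NilCat} {f : X ⟶ Y} {g : Y ⟶ Z} {h : X ⟶ Z} (w : f ≫ g = h)
    (x : (F.obj X).obj) : app (F.map g) (app (F.map f) x) = app (F.map h) x := by
  rw [← w, F.map_comp]; rfl

theorem app_map_id {X : NilCat} (x : (F.obj X).obj) : app (F.map (𝟙 X)) x = x := by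
  rw [F.map_id]; rfl

theorem app_map_zeroHom (hF0 : Subsingleton (F.obj triv).obj) (X Y : NilCat)
    (x : (F.obj X).obj) : app (F.map (zeroHom X Y)) x = 1 := by
  rw [← app_map_app_map F (zeroHom_comp (X := X) (Y := triv) (zeroHom triv Y)),
    Subsingleton.elim (app _ x) 1, app_one]

end

variable {X X' Y Y' : NilCat}

theorem inl_retr₁ : coprod.inl ≫ retr₁ X Y = 𝟙 X := coprod.inl_desc _ _
theorem inr_retr₁ : coprod.inr ≫ retr₁ X Y = zeroHom Y X := coprod.inr_desc _ _
theorem inl_retr₂ : coprod.inl ≫ retr₂ X Y = zeroHom X Y := coprod.inl_desc _ _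
theorem inr_retr₂ : coprod.inr ≫ retr₂ X Y = 𝟙 Y := coprod.inr_desc _ _

theorem coprodMap_retr₁ (f : X ⟶ X') : coprod.map f (𝟙 Y) ≫ retr₁ X' Y = retr₁ X Y ≫ f := by
  apply coprod.hom_ext
  · rw [coprod.inl_map_assoc, inl_retr₁, Category.comp_id, ← Category.assoc, inl_retr₁,
      Category.id_comp]
  · rw [coprod.inr_map_assoc, inr_retr₁, Category.id_comp, ← Category.assoc, inr_retr₁,
      zeroHom_comp]

theorem coprodMap_retr₂ (f : X ⟶ X') : coprod.map f (𝟙 Y) ≫ retr₂ X' Y = retr₂ X Y := by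
  apply coprod.hom_ext
  · rw [coprod.inl_map_assoc, inl_retr₂, inl_retr₂, comp_zeroHom]
  · rw [coprod.inr_map_assoc, inr_retr₂, inr_retr₂, Category.comp_id]

theorem coprodMap_zeroHom : coprod.map (zeroHom X X') (𝟙 Y) = retr₂ X Y ≫ coprod.inr := by
  apply coprod.hom_ext
  · rw [coprod.inl_map, ← Category.assoc, inl_retr₂, zeroHom_comp, zeroHom_comp]
  · rw [coprod.inr_map, ← Category.assoc, inr_retr₂]

theorem braiding_hom_retr₁ : (coprod.braiding X Y).hom ≫ retr₁ Y X = retr₂ X Y := by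
  apply coprod.hom_ext
  · rw [coprod.braiding_hom, coprod.inl_desc_assoc, inr_retr₁, inl_retr₂]
  · rw [coprod.braiding_hom, coprod.inr_desc_assoc, inl_retr₁, inr_retr₂]

theorem braiding_hom_retr₂ : (coprod.braiding X Y).hom ≫ retr₂ Y X = retr₁ X Y := by
  apply coprod.hom_ext
  · rw [coprod.braiding_hom, coprod.inl_desc_assoc, inr_retr₂, inl_retr₁]
  · rw [coprod.braiding_hom, coprod.inr_desc_assoc, inl_retr₂, inr_retr₁]

theorem braiding_hom_coprodMap_braiding_hom (f : Y ⟶ Y') :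
    (coprod.braiding X Y).hom ≫ coprod.map f (𝟙 X) ≫ (coprod.braiding Y' X).hom =
      coprod.map (𝟙 X) f := by
  apply coprod.hom_ext
  · rw [coprod.braiding_hom, coprod.inl_desc_assoc, coprod.inr_map_assoc, Category.id_comp,
      coprod.braiding_hom, coprod.inr_desc, coprod.inl_map, Category.id_comp]
  · rw [coprod.braiding_hom, coprod.inr_desc_assoc, coprod.inl_map_assoc, coprod.braiding_hom,
      coprod.inl_desc, coprod.inr_map]

end NilCat

open NilCat

section CrossEffect

variable (F : NilCat ⥤ NilCat) {X X' Y : NilCat}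

theorem mul_mem_crossEffectSet {g h : (F.obj (X ⨿ Y)).obj} (hg : g ∈ crossEffectSet F X Y)
    (hh : h ∈ crossEffectSet F X Y) : g * h ∈ crossEffectSet F X Y :=
  ⟨by rw [app_mul, hg.1, hh.1, mul_one], by rw [app_mul, hg.2, hh.2, mul_one]⟩

theorem app_map_coprodMap_mem_crossEffectSet (f : X ⟶ X') {g : (F.obj (X ⨿ Y)).obj}
    (hg : g ∈ crossEffectSet F X Y) :
    app (F.map (coprod.map f (𝟙 Y))) g ∈ crossEffectSet F X' Y := by
  refine ⟨?_, ?_⟩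
  · rw [app_map_app_map F (coprodMap_retr₁ f), ← app_map_app_map F rfl, hg.1, app_one]
  · rw [app_map_app_map F (coprodMap_retr₂ f), hg.2]

theorem app_map_coprodMap_zeroHom {g : (F.obj (X ⨿ Y)).obj} (hg : g ∈ crossEffectSet F X Y) :
    app (F.map (coprod.map (zeroHom X X') (𝟙 Y))) g = 1 := by
  rw [coprodMap_zeroHom, ← app_map_app_map F rfl, hg.2, app_one]

theorem app_map_braiding_hom_mem_crossEffectSet {g : (F.obj (X ⨿ Y)).obj}
    (hg : g ∈ crossEffectSet F X Y) :
    app (F.map (coprod.braiding X Y).hom) g ∈ crossEffectSet F Y X :=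
  ⟨(app_map_app_map F braiding_hom_retr₁ g).trans hg.2,
    (app_map_app_map F braiding_hom_retr₂ g).trans hg.1⟩

theorem crossEffectSet_bijOn_braiding (X Y : NilCat) :
    Set.BijOn (app (F.map (coprod.braiding X Y).hom)) (crossEffectSet F X Y)
      (crossEffectSet F Y X) :=
  Set.InvOn.bijOn
    ⟨fun g _ => (app_map_app_map F (coprod.symmetry X Y) g).trans (app_map_id F g),
      fun g _ => (app_map_app_map F (coprod.symmetry Y X) g).trans (app_map_id F g)⟩
    (fun _ => app_map_braiding_hom_mem_crossEffectSet F)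
    (fun _ => app_map_braiding_hom_mem_crossEffectSet F)

variable [PreservesFiniteCoproducts F]

theorem closure_range_app_map_inl_union_range_app_map_inr (X Y : NilCat) :
    closure (Set.range (app (F.map (coprod.inl : X ⟶ X ⨿ Y))) ∪
      Set.range (app (F.map (coprod.inr : Y ⟶ X ⨿ Y)))) = ⊤ :=
  closure_range_inl_union_range_inr (isColimitOfHasBinaryCoproductOfPreservesColimit F X Y)

theorem mem_closure_commutatorElement_of_mem_crossEffectSet
    (hF0 : Subsingleton (F.obj triv).obj) {g : (F.obj (X ⨿ Y)).obj}
    (hg : g ∈ crossEffectSet F X Y) :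
    g ∈ closure {x | ∃ a b,
      ⁅app (F.map (coprod.inl : X ⟶ X ⨿ Y)) a, app (F.map (coprod.inr : Y ⟶ X ⨿ Y)) b⁆ = x} :=
  mem_closure_commutatorElement_of_retractions (F.obj (X ⨿ Y)).property
    (F.map coprod.inl).hom.hom (F.map coprod.inr).hom.hom
    (F.map (retr₁ X Y)).hom.hom (F.map (retr₂ X Y)).hom.hom
    (fun a => (app_map_app_map F inl_retr₁ a).trans (app_map_id F a))
    (fun b => (app_map_app_map F inr_retr₂ b).trans (app_map_id F b))
    (fun b => (app_map_app_map F inr_retr₁ b).trans (app_map_zeroHom F hF0 _ _ b))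
    (fun a => (app_map_app_map F inl_retr₂ a).trans (app_map_zeroHom F hF0 _ _ a))
    (closure_range_app_map_inl_union_range_app_map_inr F X Y) hg.1 hg.2

theorem map_app_retr₁_inl_mul_map_app_retr₂_inr (hF0 : Subsingleton (F.obj triv).obj)
    {X₁ X₂ : NilCat} {H : Type*} [Group H] (θ : (F.obj (X₁ ⨿ X₂)).obj →* H)
    (hθ : ∀ x y, Commute (θ x) (θ y)) (a : (F.obj (X₁ ⨿ X₂)).obj) :
    θ (app (F.map (retr₁ X₁ X₂ ≫ coprod.inl)) a) * θ (app (F.map (retr₂ X₁ X₂ ≫ coprod.inr)) a) =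
      θ a := by
  refine map_mul_map_eq_of_mem_closure (φ := θ.comp (F.map (retr₁ X₁ X₂ ≫ coprod.inl)).hom.hom)
    (ψ := θ.comp (F.map (retr₂ X₁ X₂ ≫ coprod.inr)).hom.hom) (fun x _ y _ => hθ _ _) ?_
    (closure_range_app_map_inl_union_range_app_map_inr F X₁ X₂ ▸ mem_top a)
  rintro _ (⟨x, rfl⟩ | ⟨y, rfl⟩)
  · change θ (app _ (app _ x)) * θ (app _ (app _ x)) = _
    rw [app_map_app_map F (by rw [← Category.assoc, inl_retr₁, Category.id_comp]),
      app_map_app_map F (by rw [← Category.assoc, inl_retr₂, zeroHom_comp]),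
      app_map_zeroHom F hF0, map_one, mul_one]
  · change θ (app _ (app _ y)) * θ (app _ (app _ y)) = _
    rw [app_map_app_map F (by rw [← Category.assoc, inr_retr₁, zeroHom_comp]),
      app_map_app_map F (by rw [← Category.assoc, inr_retr₂, Category.id_comp]),
      app_map_zeroHom F hF0, map_one, one_mul]

theorem crossEffect_decomposition (hF0 : Subsingleton (F.obj triv).obj) {X₁ X₂ Y : NilCat}
    {g : (F.obj ((X₁ ⨿ X₂) ⨿ Y)).obj} (hg : g ∈ crossEffectSet F (X₁ ⨿ X₂) Y) :
    app (F.map (coprod.map coprod.inl (𝟙 Y))) (app (F.map (coprod.map (retr₁ X₁ X₂) (𝟙 Y))) g) *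
      app (F.map (coprod.map coprod.inr (𝟙 Y))) (app (F.map (coprod.map (retr₂ X₁ X₂) (𝟙 Y))) g)
      = g := by
  have h2 := (F.obj ((X₁ ⨿ X₂) ⨿ Y)).property
  rw [app_map_app_map F (coprod.map_map _ _ _ _), app_map_app_map F (coprod.map_map _ _ _ _),
    Category.id_comp]
  refine map_mul_map_eq_of_mem_closure (χ := MonoidHom.id _) (fun x hx y _ =>
    commute_of_mem_commutator_of_class_two h2
      (MonoidHom.map_mem_commutator _ (closure_commutatorElement_le_commutator _ _ hx)) _) ?_
    (mem_closure_commutatorElement_of_mem_crossEffectSet F hF0 hg)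
  rintro _ ⟨a, b, rfl⟩
  simp only [MonoidHom.id_apply, map_commutatorElement, ← app.eq_1]
  have hinl (p : X₁ ⨿ X₂ ⟶ X₁ ⨿ X₂) : app (F.map (coprod.map p (𝟙 Y))) (app (F.map coprod.inl) a) =
      app (F.map coprod.inl) (app (F.map p) a) :=
    (app_map_app_map F (coprod.inl_map _ _) a).trans (app_map_app_map F rfl a).symm
  have hinr (p : X₁ ⨿ X₂ ⟶ X₁ ⨿ X₂) :
      app (F.map (coprod.map p (𝟙 Y))) (app (F.map coprod.inr) b) = app (F.map coprod.inr) b :=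
    app_map_app_map F (by rw [coprod.inr_map, Category.id_comp]) b
  rw [hinl, hinl, hinr, hinr]
  exact map_app_retr₁_inl_mul_map_app_retr₂_inr F hF0
    ((commutatorElementLeftHom h2 (app (F.map coprod.inr) b)).comp (F.map coprod.inl).hom.hom)
    (fun x y => commutatorElement_eq_one_iff_commute.1 (h2 _ _ _)) a

theorem crossEffectSet_bijOn_coprod_left (hF0 : Subsingleton (F.obj triv).obj)
    (X₁ X₂ Y : NilCat) :
    Set.BijOn
      (fun g => (app (F.map (coprod.map (retr₁ X₁ X₂) (𝟙 Y))) g,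
        app (F.map (coprod.map (retr₂ X₁ X₂) (𝟙 Y))) g))
      (crossEffectSet F (X₁ ⨿ X₂) Y) (crossEffectSet F X₁ Y ×ˢ crossEffectSet F X₂ Y) := by
  refine ⟨fun g hg => ⟨app_map_coprodMap_mem_crossEffectSet F _ hg,
    app_map_coprodMap_mem_crossEffectSet F _ hg⟩, fun g hg g' hg' h => ?_, ?_⟩
  · rw [Prod.mk.injEq] at h
    rw [← crossEffect_decomposition F hF0 hg, ← crossEffect_decomposition F hF0 hg', h.1, h.2]
  · rintro ⟨k₁, k₂⟩ ⟨hk₁, hk₂⟩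
    refine ⟨_, mul_mem_crossEffectSet F (app_map_coprodMap_mem_crossEffectSet F coprod.inl hk₁)
      (app_map_coprodMap_mem_crossEffectSet F coprod.inr hk₂), Prod.ext ?_ ?_⟩ <;> dsimp only
    · rw [app_mul, app_map_app_map F (coprod.map_map _ _ _ _), inl_retr₁, Category.id_comp,
        coprod.map_id_id, app_map_id, app_map_app_map F (coprod.map_map _ _ _ _), inr_retr₁,
        Category.id_comp, app_map_coprodMap_zeroHom F hk₂, mul_one]
    · rw [app_mul, app_map_app_map F (coprod.map_map _ _ _ _), inl_retr₂, Category.id_comp,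
        app_map_coprodMap_zeroHom F hk₁, app_map_app_map F (coprod.map_map _ _ _ _), inr_retr₂,
        Category.id_comp, coprod.map_id_id, app_map_id, one_mul]

theorem crossEffectSet_bijOn_coprod_right (hF0 : Subsingleton (F.obj triv).obj)
    (X Y₁ Y₂ : NilCat) :
    Set.BijOn
      (fun g => (app (F.map (coprod.map (𝟙 X) (retr₁ Y₁ Y₂))) g,
        app (F.map (coprod.map (𝟙 X) (retr₂ Y₁ Y₂))) g))
      (crossEffectSet F X (Y₁ ⨿ Y₂)) (crossEffectSet F X Y₁ ×ˢ crossEffectSet F X Y₂) := by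
  refine (((crossEffectSet_bijOn_braiding F Y₁ X).prodMap
    (crossEffectSet_bijOn_braiding F Y₂ X)).comp
      ((crossEffectSet_bijOn_coprod_left F hF0 Y₁ Y₂ X).comp
        (crossEffectSet_bijOn_braiding F X (Y₁ ⨿ Y₂)))).congr fun g _ => ?_
  simp only [Function.comp_apply, app_map_app_map F rfl, Category.assoc,
    braiding_hom_coprodMap_braiding_hom]

end CrossEffect

/-- If `F : Nil → Nil` preserves finite coproducts and `F(0) = 0`, then `F` is quadratic:
its second cross-effect `F(X|Y) = Ker(F(X ∨ Y) → F(X) × F(Y))` is linear (additive) in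
each variable, i.e. the canonical comparison maps
`F(X₁ ∨ X₂ | Y) → F(X₁|Y) × F(X₂|Y)` and `F(X | Y₁ ∨ Y₂) → F(X|Y₁) × F(X|Y₂)`
are bijections. -/
theorem nilCat_coproductPreserving_is_quadratic
    (F : NilCat ⥤ NilCat) [PreservesFiniteCoproducts F]
    (hF0 : Subsingleton (F.obj NilCat.triv).obj) :
    (∀ X₁ X₂ Y : NilCat,
      Set.BijOn
        (fun g => (NilCat.app (F.map (coprod.map (NilCat.retr₁ X₁ X₂) (𝟙 Y))) g,
                   NilCat.app (F.map (coprod.map (NilCat.retr₂ X₁ X₂) (𝟙 Y))) g))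
        (crossEffectSet F (X₁ ⨿ X₂) Y)
        ((crossEffectSet F X₁ Y) ×ˢ (crossEffectSet F X₂ Y))) ∧
    (∀ X Y₁ Y₂ : NilCat,
      Set.BijOn
        (fun g => (NilCat.app (F.map (coprod.map (𝟙 X) (NilCat.retr₁ Y₁ Y₂))) g,
                   NilCat.app (F.map (coprod.map (𝟙 X) (NilCat.retr₂ Y₁ Y₂))) g))
        (crossEffectSet F X (Y₁ ⨿ Y₂))
        ((crossEffectSet F X Y₁) ×ˢ (crossEffectSet F X Y₂))) :=
  ⟨crossEffectSet_bijOn_coprod_left F hF0, crossEffectSet_bijOn_coprod_right F hF0⟩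
end

section
/- Let (A, δ_A) and (B, δ_B) be abelian groups with cosymmetry. Then the map δ_{A⊗B} : A ⊗ B → Sym²(A ⊗ B) defined on generators by δ(a ⊗ b) = a * δ_B(b) + δ_A(a) * b - δ_A(a) * δ_B(b) makes (A ⊗ B, δ_{A⊗B}) an abelian group with cosymmetry, i.e., δ_{A⊗B}(u + v) = δ_{A⊗B}(u) + δ_{A⊗B}(v) + uv for all u, v ∈ A ⊗ B. -/
open scoped TensorProduct

/-- The second symmetric power of an abelian group:
`Sym²(A) = (A ⊗ A)/(a⊗b - b⊗a)`. -/
abbrev Sym2Q (A : Type*) [AddCommGroup A] : Type _ :=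
  (A ⊗[ℤ] A) ⧸
    AddSubgroup.closure {x : A ⊗[ℤ] A | ∃ a b : A, x = a ⊗ₜ[ℤ] b - b ⊗ₜ[ℤ] a}

/-- The product `ab ∈ Sym²(A)` of two elements of `A`. -/
noncomputable def symProd {A : Type*} [AddCommGroup A] (a b : A) : Sym2Q A :=
  QuotientAddGroup.mk (a ⊗ₜ[ℤ] b)

/-- A cosymmetry on an abelian group `A`: a map `δ : A → Sym²(A)` with
`δ(a+b) = δ(a) + δ(b) + ab`. -/
def IsCosymmetry {A : Type*} [AddCommGroup A] (δ : A → Sym2Q A) : Prop :=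
  ∀ a b : A, δ (a + b) = δ a + δ b + symProd a b

section TwistedAux

variable {M : Type*} [AddCommGroup M]

lemma symProd_add_left (a b c : M) : symProd (a + b) c = symProd a c + symProd b c := by
  unfold symProd
  rw [TensorProduct.add_tmul]
  rfl

lemma symProd_add_right (a b c : M) : symProd a (b + c) = symProd a b + symProd a c := by
  unfold symProd
  rw [TensorProduct.tmul_add]
  rfl

lemma symProd_zero_left (b : M) : symProd (0 : M) b = 0 := by
  unfold symProd
  rw [TensorProduct.zero_tmul]
  rfl

lemma symProd_neg_left (a b : M) : symProd (-a) b = -symProd a b := by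
  have h := (symProd_add_left a (-a) b).symm
  rw [add_neg_cancel, symProd_zero_left] at h
  exact (neg_eq_of_add_eq_zero_right h).symm

lemma symProd_comm (a b : M) : symProd a b = symProd b a := by
  unfold symProd
  rw [QuotientAddGroup.eq]
  exact AddSubgroup.subset_closure ⟨b, a, by rw [neg_add_eq_sub]⟩

/-- The twisted group `M × Sym²(M)` with `(u,x)+(v,y) = (u+v, x+y+uv)`. -/
def Twisted (M : Type*) [AddCommGroup M] : Type _ := M × Sym2Q M

noncomputable instance : Add (Twisted M) :=
  ⟨fun p q => (p.1 + q.1, p.2 + q.2 + symProd p.1 q.1)⟩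

noncomputable instance : Zero (Twisted M) := ⟨((0 : M), (0 : Sym2Q M))⟩

noncomputable instance : Neg (Twisted M) :=
  ⟨fun p => (-p.1, -p.2 + symProd p.1 p.1)⟩

lemma Twisted.add_def (p q : Twisted M) :
    p + q = (p.1 + q.1, p.2 + q.2 + symProd p.1 q.1) := rfl

lemma Twisted.zero_def : (0 : Twisted M) = ((0 : M), (0 : Sym2Q M)) := rfl

noncomputable instance : AddCommGroup (Twisted M) :=
  { AddGroup.ofLeftAxioms
      (fun p q r => by
        show ((p.1 + q.1) + r.1, _) = (p.1 + (q.1 + r.1), _)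
        refine Prod.ext (add_assoc _ _ _) ?_
        show (p.2 + q.2 + symProd p.1 q.1) + r.2 + symProd (p.1 + q.1) r.1
            = p.2 + (q.2 + r.2 + symProd q.1 r.1) + symProd p.1 (q.1 + r.1)
        rw [symProd_add_left, symProd_add_right]
        abel)
      (fun p => by
        show ((0 : M) + p.1, (0 : Sym2Q M) + p.2 + symProd 0 p.1) = p
        rw [symProd_zero_left, zero_add, add_zero, zero_add]
        exact Prod.mk.eta)
      (fun p => by
        show (-p.1 + p.1, (-p.2 + symProd p.1 p.1) + p.2 + symProd (-p.1) p.1) = (0, 0)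
        rw [symProd_neg_left, neg_add_cancel]
        refine Prod.ext rfl ?_
        show (-p.2 + symProd p.1 p.1) + p.2 + -symProd p.1 p.1 = 0
        abel) with
    add_comm := fun p q => by
      show (p.1 + q.1, p.2 + q.2 + symProd p.1 q.1) = (q.1 + p.1, q.2 + p.2 + symProd q.1 p.1)
      rw [add_comm p.1 q.1, symProd_comm, add_comm p.2 q.2] }

end TwistedAux

set_option maxHeartbeats 1000000 in
/-- For abelian groups with cosymmetry `(A, δ_A)`, `(B, δ_B)`, the formula
`δ(a⊗b) = a * δ_B(b) + δ_A(a) * b - δ_A(a) * δ_B(b)` (where `*` denotes the canonical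
pairings with values in `Sym²(A ⊗ B)`) defines a cosymmetry on `A ⊗ B`:
there is a map `δ : A ⊗ B → Sym²(A ⊗ B)` given on generators by this formula and
satisfying `δ(u+v) = δ(u) + δ(v) + uv`. -/
theorem tensor_cosymmetry {A B : Type*} [AddCommGroup A] [AddCommGroup B]
    (δA : A → Sym2Q A) (δB : B → Sym2Q B)
    (hA : IsCosymmetry δA) (hB : IsCosymmetry δB)
    -- the pairing `a * (bb') = (a⊗b)(a⊗b')`
    (sL : A → Sym2Q B → Sym2Q (A ⊗[ℤ] B))
    (hsL : ∀ (a : A) (b b' : B), sL a (symProd b b') = symProd (a ⊗ₜ[ℤ] b) (a ⊗ₜ[ℤ] b'))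
    (hsLadd : ∀ (a : A) (u v : Sym2Q B), sL a (u + v) = sL a u + sL a v)
    -- the pairing `(aa') * b = (a⊗b)(a'⊗b)`
    (sR : Sym2Q A → B → Sym2Q (A ⊗[ℤ] B))
    (hsR : ∀ (a a' : A) (b : B), sR (symProd a a') b = symProd (a ⊗ₜ[ℤ] b) (a' ⊗ₜ[ℤ] b))
    (hsRadd : ∀ (u v : Sym2Q A) (b : B), sR (u + v) b = sR u b + sR v b)
    -- the pairing `(aa') * (bb') = (a⊗b)(a'⊗b') + (a'⊗b)(a⊗b')`
    (sT : Sym2Q A → Sym2Q B → Sym2Q (A ⊗[ℤ] B))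
    (hsT : ∀ (a a' : A) (b b' : B), sT (symProd a a') (symProd b b') =
      symProd (a ⊗ₜ[ℤ] b) (a' ⊗ₜ[ℤ] b') + symProd (a' ⊗ₜ[ℤ] b) (a ⊗ₜ[ℤ] b'))
    (hsTaddl : ∀ (u v : Sym2Q A) (w : Sym2Q B), sT (u + v) w = sT u w + sT v w)
    (hsTaddr : ∀ (u : Sym2Q A) (v w : Sym2Q B), sT u (v + w) = sT u v + sT u w) :
    ∃ δ : A ⊗[ℤ] B → Sym2Q (A ⊗[ℤ] B),
      (∀ (a : A) (b : B), δ (a ⊗ₜ[ℤ] b) = sL a (δB b) + sR (δA a) b - sT (δA a) (δB b)) ∧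
      (∀ u v : A ⊗[ℤ] B, δ (u + v) = δ u + δ v + symProd u v) := by
  -- zero lemmas
  have sL0 : ∀ a : A, sL a 0 = 0 := fun a => by
    have h := hsLadd a 0 0; rw [add_zero] at h; exact (left_eq_add.mp h)
  have sR0 : ∀ b : B, sR 0 b = 0 := fun b => by
    have h := hsRadd 0 0 b; rw [add_zero] at h; exact (left_eq_add.mp h)
  have sT0l : ∀ w : Sym2Q B, sT 0 w = 0 := fun w => by
    have h := hsTaddl 0 0 w; rw [add_zero] at h; exact (left_eq_add.mp h)
  have sT0r : ∀ u : Sym2Q A, sT u 0 = 0 := fun u => by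
    have h := hsTaddr u 0 0; rw [add_zero] at h; exact (left_eq_add.mp h)
  -- key expansion lemmas
  have L1 : ∀ (a a' : A) (u : Sym2Q B),
      sL (a + a') u = sL a u + sL a' u + sT (symProd a a') u := by
    intro a a' u
    obtain ⟨x, rfl⟩ := QuotientAddGroup.mk_surjective u
    induction x using TensorProduct.induction_on with
    | zero =>
        show sL (a + a') 0 = sL a 0 + sL a' 0 + sT (symProd a a') 0
        rw [sL0, sL0, sL0, sT0r, add_zero, add_zero]
    | tmul b b' =>
        show sL (a + a') (symProd b b') =
          sL a (symProd b b') + sL a' (symProd b b') + sT (symProd a a') (symProd b b')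
        rw [hsL, hsL, hsL, hsT, TensorProduct.add_tmul, TensorProduct.add_tmul,
          symProd_add_left, symProd_add_right, symProd_add_right]
        abel
    | add x y hx hy =>
        have hmk : (QuotientAddGroup.mk (x + y) : Sym2Q B) =
          QuotientAddGroup.mk x + QuotientAddGroup.mk y := rfl
        rw [hmk, hsLadd, hsLadd, hsLadd, hsTaddr, hx, hy]
        abel
  have L2 : ∀ (u : Sym2Q A) (b b' : B),
      sR u (b + b') = sR u b + sR u b' + sT u (symProd b b') := by
    intro u b b'
    obtain ⟨x, rfl⟩ := QuotientAddGroup.mk_surjective u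
    induction x using TensorProduct.induction_on with
    | zero =>
        show sR 0 (b + b') = sR 0 b + sR 0 b' + sT 0 (symProd b b')
        rw [sR0, sR0, sR0, sT0l, add_zero, add_zero]
    | tmul a a' =>
        show sR (symProd a a') (b + b') =
          sR (symProd a a') b + sR (symProd a a') b' + sT (symProd a a') (symProd b b')
        rw [hsR, hsR, hsR, hsT, TensorProduct.tmul_add, TensorProduct.tmul_add,
          symProd_add_left, symProd_add_right, symProd_add_right,
          symProd_comm (a ⊗ₜ[ℤ] b') (a' ⊗ₜ[ℤ] b)]
        abel
    | add x y hx hy =>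
        have hmk : (QuotientAddGroup.mk (x + y) : Sym2Q A) =
          QuotientAddGroup.mk x + QuotientAddGroup.mk y := rfl
        rw [hmk, hsRadd, hsRadd, hsRadd, hsTaddl, hx, hy]
        abel
  -- the generator formula
  set F : A → B → Sym2Q (A ⊗[ℤ] B) :=
    fun a b => sL a (δB b) + sR (δA a) b - sT (δA a) (δB b) with hF
  -- the section as a map into the twisted group
  have hadd_left : ∀ (a a' : A) (b : B),
      F (a + a') b = F a b + F a' b + symProd (a ⊗ₜ[ℤ] b) (a' ⊗ₜ[ℤ] b) := by
    intro a a' b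
    simp only [hF]
    rw [L1, hA, hsRadd, hsRadd, hsTaddl, hsTaddl, hsR]
    abel
  have hadd_right : ∀ (a : A) (b b' : B),
      F a (b + b') = F a b + F a b' + symProd (a ⊗ₜ[ℤ] b) (a ⊗ₜ[ℤ] b') := by
    intro a b b'
    simp only [hF]
    rw [L2, hB, hsLadd, hsLadd, hsTaddr, hsTaddr, hsL]
    abel
  -- build the additive hom into the twisted group
  let ψ : A → B → Twisted (A ⊗[ℤ] B) := fun a b => (a ⊗ₜ[ℤ] b, F a b)
  have hψadd_right : ∀ (a : A) (b b' : B), ψ a (b + b') = ψ a b + ψ a b' := by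
    intro a b b'
    rw [Twisted.add_def]
    exact Prod.ext (TensorProduct.tmul_add a b b') (hadd_right a b b')
  have hψadd_left : ∀ (a a' : A) (b : B), ψ (a + a') b = ψ a b + ψ a' b := by
    intro a a' b
    rw [Twisted.add_def]
    exact Prod.ext (TensorProduct.add_tmul a a' b) (hadd_left a a' b)
  let g : A →+ B →+ Twisted (A ⊗[ℤ] B) :=
    AddMonoidHom.mk' (fun a => AddMonoidHom.mk' (ψ a) (hψadd_right a))
      (fun a a' => AddMonoidHom.ext fun b => hψadd_left a a' b)
  have hg : ∀ (r : ℤ) (a : A) (b : B), g (r • a) b = g a (r • b) := by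
    intro r a b
    rw [map_zsmul g r a, map_zsmul (g a) r b]
    rfl
  let Ψ : A ⊗[ℤ] B →+ Twisted (A ⊗[ℤ] B) := TensorProduct.liftAddHom g hg
  have hΨtmul : ∀ (a : A) (b : B), Ψ (a ⊗ₜ[ℤ] b) = (a ⊗ₜ[ℤ] b, F a b) := fun a b =>
    TensorProduct.liftAddHom_tmul g hg a b
  have hfst : ∀ u : A ⊗[ℤ] B, (Ψ u).1 = u := by
    intro u
    induction u using TensorProduct.induction_on with
    | zero => rw [map_zero]; rfl
    | tmul a b => rw [hΨtmul]
    | add x y hx hy =>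
        rw [map_add]
        show (Ψ x).1 + (Ψ y).1 = x + y
        rw [hx, hy]
  refine ⟨fun u => (Ψ u).2, fun a b => ?_, fun u v => ?_⟩
  · show (Ψ (a ⊗ₜ[ℤ] b)).2 = sL a (δB b) + sR (δA a) b - sT (δA a) (δB b)
    rw [hΨtmul]
  show (Ψ (u + v)).2 = (Ψ u).2 + (Ψ v).2 + symProd u v
  rw [map_add]
  show (Ψ u).2 + (Ψ v).2 + symProd (Ψ u).1 (Ψ v).1 = (Ψ u).2 + (Ψ v).2 + symProd u v
  rw [hfst, hfst]
end
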